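/- arXiv:1105.2268 — 5 statements merged into one kernel-verified Lean document; each statement's English description precedes it below -/
import Mathlib

section
/- (Helstrom bound, two states, unequal priors.) Let ρ₀, ρ₁ be density operators on a finite-dimensional Hilbert space and p₀, p₁ ≥ 0 with p₀ + p₁ = 1. Then the maximum over POVMs {M₀, M₁} (M₀, M₁ ≥ 0, M₀ + M₁ = I) of p₀ tr(M₀ρ₀) + p₁ tr(M₁ρ₁) equals p₀ + tr((p₁ρ₁ - p₀ρ₀)⁺), where X⁺ denotes the positive part of a Hermitian operator X. -/
open Matrix ComplexOrder

/-- The positive part `A⁺` of a Hermitian matrix `A`, obtained from its spectral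
decomposition by keeping only the nonnegative eigenvalues. -/
noncomputable def posPart' {ι : Type*} [Fintype ι] [DecidableEq ι]
    (A : Matrix ι ι ℂ) (hA : A.IsHermitian) : Matrix ι ι ℂ :=
  (hA.eigenvectorUnitary : Matrix ι ι ℂ) *
    Matrix.diagonal (fun i => ((max (hA.eigenvalues i) 0 : ℝ) : ℂ)) *
    star (hA.eigenvectorUnitary : Matrix ι ι ℂ)

/-!
Writing `M₀ = 1 - M₁` and using `tr ρ₀ = 1`, the success probability of a POVM is
`p₀ + tr (M₁ D)` with `D = p₁ρ₁ - p₀ρ₀`, so the claim is `max_{0 ≤ M ≤ 1} tr (M D) = tr D⁺`.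
If `D = U diag(λ) U*`, then `tr (M D) = ∑ᵢ Nᵢᵢ λᵢ` with `N = U* M U`, which again satisfies
`0 ≤ N ≤ 1`; hence `0 ≤ Nᵢᵢ ≤ 1` and each term is at most `max λᵢ 0`. Equality is attained by the
spectral projection of `D` onto its eigenvectors with `λᵢ ≥ 0`.
-/

theorem Complex.mul_ofReal_le_max_zero {z : ℂ} (h₀ : 0 ≤ z) (h₁ : z ≤ 1) (r : ℝ) :
    z * r ≤ (max r 0 : ℝ) := by
  obtain ⟨t, rfl⟩ : ∃ t : ℝ, (t : ℂ) = z :=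
    ⟨z.re, (Complex.eq_re_of_ofReal_le (r := 0) (by simpa using h₀)).symm⟩
  rw [← Complex.ofReal_mul, Complex.real_le_real]
  rw [Complex.zero_le_real] at h₀
  rw [← Complex.ofReal_one, Complex.real_le_real] at h₁
  rcases le_total 0 r with hr | hr
  · exact (mul_le_of_le_one_left hr h₁).trans (le_max_left r 0)
  · exact (mul_nonpos_of_nonneg_of_nonpos h₀ hr).trans (le_max_right r 0)

namespace Matrix

theorem PosSemidef.diag_le_one_of_one_sub {ι : Type*} [DecidableEq ι] {N : Matrix ι ι ℂ}
    (hN : (1 - N).PosSemidef) (i : ι) : N i i ≤ 1 := by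
  simpa using hN.diag_nonneg (i := i)

variable {ι : Type*} [Fintype ι] [DecidableEq ι]

theorem PosSemidef.one_sub_star_mul_mul {M : Matrix ι ι ℂ} (hM : (1 - M).PosSemidef)
    (U : unitaryGroup ι ℂ) : (1 - star (U : Matrix ι ι ℂ) * M * U).PosSemidef := by
  have h := hM.conjTranspose_mul_mul_same (U : Matrix ι ι ℂ)
  rwa [Matrix.mul_sub, Matrix.sub_mul, Matrix.mul_one, ← star_eq_conjTranspose,
    Unitary.coe_star_mul_self] at h

theorem PosSemidef.unitary_mul_diagonal_mul_star (U : unitaryGroup ι ℂ) {f : ι → ℂ}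
    (hf : ∀ i, 0 ≤ f i) :
    ((U : Matrix ι ι ℂ) * diagonal f * star (U : Matrix ι ι ℂ)).PosSemidef := by
  simpa [star_eq_conjTranspose] using
    (posSemidef_diagonal_iff.mpr hf).mul_mul_conjTranspose_same (U : Matrix ι ι ℂ)

theorem one_sub_unitary_mul_diagonal_mul_star (U : unitaryGroup ι ℂ) (f : ι → ℂ) :
    1 - (U : Matrix ι ι ℂ) * diagonal f * star (U : Matrix ι ι ℂ) =
      (U : Matrix ι ι ℂ) * diagonal (1 - f) * star (U : Matrix ι ι ℂ) := by
  have h : diagonal (1 - f) = 1 - diagonal f := by rw [← diagonal_one, diagonal_sub]; rfl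
  rw [h, Matrix.mul_sub, Matrix.sub_mul, Matrix.mul_one, Unitary.mul_star_self_of_mem U.2]

theorem star_mul_unitary_mul_diagonal_mul_star_mul (U : unitaryGroup ι ℂ) (f : ι → ℂ) :
    star (U : Matrix ι ι ℂ) * ((U : Matrix ι ι ℂ) * diagonal f * star (U : Matrix ι ι ℂ)) * U =
      diagonal f := by
  simp only [Matrix.mul_assoc, Unitary.coe_star_mul_self, Matrix.mul_one]
  rw [← Matrix.mul_assoc, Unitary.coe_star_mul_self, Matrix.one_mul]

namespace IsHermitian

variable {A : Matrix ι ι ℂ}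

theorem trace_mul_eq_sum_eigenvalues (hA : A.IsHermitian) (B : Matrix ι ι ℂ) :
    (B * A).trace = ∑ i, (star (hA.eigenvectorUnitary : Matrix ι ι ℂ) * B *
      hA.eigenvectorUnitary) i i * hA.eigenvalues i := by
  set U := (hA.eigenvectorUnitary : Matrix ι ι ℂ)
  conv_lhs => rw [hA.spectral_theorem, Unitary.conjStarAlgAut_apply]
  rw [show B * (U * diagonal (RCLike.ofReal ∘ hA.eigenvalues) * star U)
      = (B * U * diagonal (RCLike.ofReal ∘ hA.eigenvalues)) * star U by noncomm_ring,
    trace_mul_comm, ← Matrix.mul_assoc, ← Matrix.mul_assoc]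
  simp [Matrix.trace, Matrix.mul_diagonal]

theorem trace_posPart' (hA : A.IsHermitian) :
    (posPart' A hA).trace = ∑ i, ((max (hA.eigenvalues i) 0 : ℝ) : ℂ) := by
  rw [posPart', trace_mul_comm, ← Matrix.mul_assoc, Unitary.star_mul_self_of_mem
    hA.eigenvectorUnitary.2, Matrix.one_mul, trace_diagonal]

theorem trace_mul_le_trace_posPart' (hA : A.IsHermitian) {M : Matrix ι ι ℂ} (hM : M.PosSemidef)
    (hM' : (1 - M).PosSemidef) : (M * A).trace ≤ (posPart' A hA).trace := by
  rw [hA.trace_mul_eq_sum_eigenvalues, hA.trace_posPart']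
  refine Finset.sum_le_sum fun i _ => Complex.mul_ofReal_le_max_zero ?_ ?_ _
  · exact (hM.conjTranspose_mul_mul_same _).diag_nonneg
  · exact (hM'.one_sub_star_mul_mul hA.eigenvectorUnitary).diag_le_one_of_one_sub i

noncomputable def nonnegSpectralProjection (hA : A.IsHermitian) : Matrix ι ι ℂ :=
  (hA.eigenvectorUnitary : Matrix ι ι ℂ) *
    diagonal (fun i => if 0 ≤ hA.eigenvalues i then 1 else 0) *
    star (hA.eigenvectorUnitary : Matrix ι ι ℂ)

theorem posSemidef_nonnegSpectralProjection (hA : A.IsHermitian) :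
    hA.nonnegSpectralProjection.PosSemidef :=
  PosSemidef.unitary_mul_diagonal_mul_star _ fun i => by split_ifs <;> simp

theorem posSemidef_one_sub_nonnegSpectralProjection (hA : A.IsHermitian) :
    (1 - hA.nonnegSpectralProjection).PosSemidef := by
  rw [nonnegSpectralProjection, one_sub_unitary_mul_diagonal_mul_star]
  exact PosSemidef.unitary_mul_diagonal_mul_star _ fun i => by
    simp only [Pi.sub_apply, Pi.one_apply]
    split_ifs <;> simp

theorem trace_nonnegSpectralProjection_mul (hA : A.IsHermitian) :
    (hA.nonnegSpectralProjection * A).trace = (posPart' A hA).trace := by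
  rw [hA.trace_mul_eq_sum_eigenvalues, nonnegSpectralProjection,
    star_mul_unitary_mul_diagonal_mul_star_mul, hA.trace_posPart']
  refine Finset.sum_congr rfl fun i _ => ?_
  rw [diagonal_apply_eq]
  split_ifs with h
  · rw [one_mul, max_eq_left h]
  · rw [zero_mul, max_eq_right (le_of_not_ge h), Complex.ofReal_zero]

theorem isGreatest_trace_mul_posPart' (hA : A.IsHermitian) :
    IsGreatest {c | ∃ M : Matrix ι ι ℂ, M.PosSemidef ∧ (1 - M).PosSemidef ∧ c = (M * A).trace}
      (posPart' A hA).trace :=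
  ⟨⟨_, hA.posSemidef_nonnegSpectralProjection, hA.posSemidef_one_sub_nonnegSpectralProjection,
      hA.trace_nonnegSpectralProjection_mul.symm⟩,
    by rintro c ⟨M, hM, hM', rfl⟩; exact hA.trace_mul_le_trace_posPart' hM hM'⟩

end IsHermitian

theorem mul_trace_add_mul_trace_of_add_eq_one {R : Type*} [CommRing R] {M₀ M₁ ρ₀ ρ₁ : Matrix ι ι R}
    (hM : M₀ + M₁ = 1) (hρ₀ : ρ₀.trace = 1) (p₀ p₁ : R) :
    p₀ * (M₀ * ρ₀).trace + p₁ * (M₁ * ρ₁).trace = p₀ + (M₁ * (p₁ • ρ₁ - p₀ • ρ₀)).trace := by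
  rw [eq_sub_of_add_eq hM, Matrix.sub_mul, Matrix.one_mul, trace_sub, hρ₀, Matrix.mul_sub,
    Matrix.mul_smul, Matrix.mul_smul, trace_sub, trace_smul, trace_smul, smul_eq_mul, smul_eq_mul]
  ring

end Matrix

theorem helstrom_two_states_general {d : ℕ} (ρ₀ ρ₁ : Matrix (Fin d) (Fin d) ℂ)
    (htr₀ : ρ₀.trace = 1) (p₀ p₁ : ℝ)
    (hD : ((p₁ : ℂ) • ρ₁ - (p₀ : ℂ) • ρ₀).IsHermitian) :
    IsGreatest {c : ℂ | ∃ M₀ M₁ : Matrix (Fin d) (Fin d) ℂ,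
        M₀.PosSemidef ∧ M₁.PosSemidef ∧ M₀ + M₁ = 1 ∧
        c = (p₀ : ℂ) * (M₀ * ρ₀).trace + (p₁ : ℂ) * (M₁ * ρ₁).trace}
      ((p₀ : ℂ) + (posPart' ((p₁ : ℂ) • ρ₁ - (p₀ : ℂ) • ρ₀) hD).trace) := by
  obtain ⟨⟨P, hP, hP', hPval⟩, hbound⟩ := hD.isGreatest_trace_mul_posPart'
  refine ⟨⟨1 - P, P, hP', hP, sub_add_cancel 1 P, ?_⟩, ?_⟩
  · rw [mul_trace_add_mul_trace_of_add_eq_one (sub_add_cancel 1 P) htr₀, hPval]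
  · rintro c ⟨M₀, M₁, hM₀, hM₁, hM, rfl⟩
    rw [mul_trace_add_mul_trace_of_add_eq_one hM htr₀]
    exact add_le_add_right (hbound ⟨M₁, hM₁, eq_sub_of_add_eq hM ▸ hM₀, rfl⟩) _

/-- Helstrom bound for two states with unequal priors: the maximum over POVMs
`{M₀, M₁}` of `p₀ tr(M₀ρ₀) + p₁ tr(M₁ρ₁)` equals `p₀ + tr((p₁ρ₁ - p₀ρ₀)⁺)`. -/
theorem helstrom_two_states {d : ℕ} (ρ₀ ρ₁ : Matrix (Fin d) (Fin d) ℂ)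
    (hρ₀ : ρ₀.PosSemidef) (hρ₁ : ρ₁.PosSemidef)
    (htr₀ : ρ₀.trace = 1) (htr₁ : ρ₁.trace = 1)
    (p₀ p₁ : ℝ) (hp₀ : 0 ≤ p₀) (hp₁ : 0 ≤ p₁) (hsum : p₀ + p₁ = 1)
    (hD : ((p₁ : ℂ) • ρ₁ - (p₀ : ℂ) • ρ₀).IsHermitian) :
    IsGreatest {c : ℂ | ∃ M₀ M₁ : Matrix (Fin d) (Fin d) ℂ,
        M₀.PosSemidef ∧ M₁.PosSemidef ∧ M₀ + M₁ = 1 ∧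
        c = (p₀ : ℂ) * (M₀ * ρ₀).trace + (p₁ : ℂ) * (M₁ * ρ₁).trace}
      ((p₀ : ℂ) + (posPart' ((p₁ : ℂ) • ρ₁ - (p₀ : ℂ) • ρ₀) hD).trace) :=
  helstrom_two_states_general ρ₀ ρ₁ htr₀ p₀ p₁ hD
end

section
/- Let ρ₀, ρ₁ be density operators on H_enc, |m⟩ a fixed unit ancilla state orthogonal to the output state |x_min⟩, and H = ∑ₙ Eₙ|Eₙ⟩⟨Eₙ| ≥ 0 a Hamiltonian on H_enc ⊗ H_anc, t ≥ 0, U = exp(-iHt). Let Pₓ := |x⟩⟨x| on H_anc. Then the success probability p_max·tr(U†(I⊗P_max)U ρ̃_max) + p_min·tr(U†(I⊗P_min)U ρ̃_min), with ρ̃ₓ := ρₓ⊗|m⟩⟨m| and |m⟩=|x_max⟩, is at most p_max + 2(1 - cos(t·C_max))·tr((p_min ρ_min - p_max ρ_max)⁺), where C_max maximizes (1 - cos(t·Eₙ)) over eigenvalues Eₙ of H. -/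
open Matrix ComplexOrder

open Kronecker

/-!
Unitarity of `U` and `|x_max⟩⟨x_max| = 1 - |x_min⟩⟨x_min|` turn the success probability into
`p_max + tr (M D)`, where `D = p_min ρ_min - p_max ρ_max`, `M = J† U† P U J`, `J ψ = ψ ⊗ |x_max⟩`
and `P = I ⊗ |x_min⟩⟨x_min|`. Since `P J = 0`, `P U J = P (U - 1) J`, so
`0 ≤ M ≤ J† (U - 1)† (U - 1) J`. In the eigenbasis of `H`, `(U - 1)† (U - 1)` is diagonal with
entries `|e^{-i t Eₙ} - 1|² = 2 (1 - cos (t Eₙ)) ≤ c := 2 (1 - cos (t C_max))`, so `M ≤ c`.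
Finally, in the eigenbasis of `D`, `0 ≤ M ≤ c` gives `tr (M D) ≤ c tr D⁺`.
-/

open scoped MatrixOrder

lemma Complex.norm_exp_neg_I_mul_sub_one_sq (θ : ℝ) :
    ‖Complex.exp (-(Complex.I * θ)) - 1‖ ^ 2 = 2 * (1 - Real.cos θ) := by
  rw [show -(Complex.I * θ) = Complex.I * ↑(-θ) by push_cast; ring,
    Complex.norm_exp_I_mul_ofReal_sub_one, Real.norm_eq_abs, sq_abs, mul_pow,
    Real.sin_sq_eq_half_sub, mul_div_cancel₀ _ two_ne_zero, Real.cos_neg]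
  ring

lemma Complex.mul_le_mul_max_zero {q : ℂ} {a c : ℝ} (hq : 0 ≤ q) (hqc : q ≤ c) :
    a * q ≤ c * max a 0 := by
  have hq_re : q = q.re := Complex.eq_re_of_ofReal_le (r := 0) (by simpa using hq)
  rw [hq_re] at hq hqc ⊢
  norm_cast at hq hqc ⊢
  rcases le_total a 0 with ha | ha
  · rw [max_eq_right ha, mul_zero]
    exact mul_nonpos_of_nonpos_of_nonneg ha hq
  · rw [max_eq_left ha, mul_comm c]
    exact mul_le_mul_of_nonneg_left hqc ha

namespace Matrix

section UnitaryConj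

lemma sum_smul_vecMulVec_eq_mul_diagonal_mul {ι κ : Type*} [Fintype κ] [DecidableEq κ]
    (v : κ → ι → ℂ) (a : κ → ℂ) :
    ∑ n, a n • vecMulVec (v n) (star (v n)) =
      of (fun i n => v n i) * diagonal a * (of fun i n => v n i)ᴴ := by
  ext j k
  simp only [mul_apply, diagonal_apply, sum_apply, vecMulVec_apply, smul_apply, of_apply,
    conjTranspose_apply, Pi.star_apply, smul_eq_mul, mul_ite, mul_zero,
    Finset.sum_ite_eq', Finset.mem_univ, if_true]
  exact Finset.sum_congr rfl fun _ _ => by ring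

variable {ι : Type*} [Fintype ι] [DecidableEq ι]

lemma of_columns_mem_unitaryGroup {v : ι → ι → ℂ}
    (hv : ∀ i j, star (v i) ⬝ᵥ v j = if i = j then 1 else 0) :
    of (fun i n => v n i) ∈ unitaryGroup ι ℂ := by
  rw [mem_unitaryGroup_iff']
  ext n m
  simpa [mul_apply, one_apply, dotProduct] using hv n m

variable (u : unitaryGroup ι ℂ)

local notation "φ" => Unitary.conjStarAlgAut ℂ (Matrix ι ι ℂ) u

lemma exp_conjStarAlgAut_diagonal (a : ι → ℂ) :
    NormedSpace.exp (φ (diagonal a)) = φ (diagonal fun n => Complex.exp (a n)) := by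
  have hinv : (u : Matrix ι ι ℂ)⁻¹ = star (u : Matrix ι ι ℂ) :=
    inv_eq_right_inv (Unitary.mul_star_self_of_mem u.2)
  have hunit : IsUnit (u : Matrix ι ι ℂ) := (Unitary.toUnits u).isUnit
  simp only [Unitary.conjStarAlgAut_apply, ← hinv, exp_conj _ _ hunit, exp_diagonal]
  congr 3
  funext n
  simp [Complex.exp_eq_exp_ℂ]

lemma exp_smul_sum_smul_vecMulVec {v : ι → ι → ℂ}
    (hv : ∀ i j, star (v i) ⬝ᵥ v j = if i = j then 1 else 0) (s : ℂ) (a : ι → ℂ) :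
    NormedSpace.exp (s • ∑ n, a n • vecMulVec (v n) (star (v n))) =
      Unitary.conjStarAlgAut ℂ (Matrix ι ι ℂ) ⟨_, of_columns_mem_unitaryGroup hv⟩
        (diagonal fun n => Complex.exp (s * a n)) := by
  rw [sum_smul_vecMulVec_eq_mul_diagonal_mul, ← exp_conjStarAlgAut_diagonal]
  congr 1
  rw [show (diagonal fun n => s * a n) = s • diagonal a from diagonal_smul s a, map_smul]
  rfl

lemma conjStarAlgAut_diagonal_mem_unitaryGroup {g : ι → ℂ} (hg : ∀ n, ‖g n‖ = 1) :
    φ (diagonal g) ∈ unitaryGroup ι ℂ := by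
  rw [mem_unitaryGroup_iff', ← map_star, ← map_mul, star_eq_conjTranspose,
    diagonal_conjTranspose, diagonal_mul_diagonal, ← map_one φ, ← diagonal_one]
  congr 2
  funext n
  simp [Complex.conj_mul', hg n]

lemma conjTranspose_mul_self_conjStarAlgAut_diagonal_sub_one_le {g : ι → ℂ} {c : ℝ}
    (hg : ∀ n, ‖g n - 1‖ ^ 2 ≤ c) :
    (φ (diagonal g) - 1)ᴴ * (φ (diagonal g) - 1) ≤ (c : ℂ) • 1 := by
  rw [← map_one φ, ← map_sub, ← star_eq_conjTranspose, ← map_star, ← map_mul, ← map_smul]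
  refine star_right_conjugate_le_conjugate ?_ _
  rw [← diagonal_one', diagonal_sub, star_eq_conjTranspose, diagonal_conjTranspose,
    diagonal_mul_diagonal, ← diagonal_smul, le_iff, diagonal_sub, posSemidef_diagonal_iff]
  intro n
  simp only [Pi.smul_apply, Pi.star_apply, Pi.one_apply, smul_eq_mul, mul_one,
    RCLike.star_def, Complex.conj_mul', sub_nonneg]
  exact_mod_cast hg n

end UnitaryConj

section Compression

variable {ι ι' : Type*} [Fintype ι] [Fintype ι']

lemma conjTranspose_mul_mul_le_conjTranspose_mul_mul {A B : Matrix ι ι ℂ} (h : A ≤ B)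
    (J : Matrix ι ι' ℂ) : Jᴴ * A * J ≤ Jᴴ * B * J := by
  rw [le_iff] at h ⊢
  simpa only [Matrix.mul_sub, Matrix.sub_mul] using h.conjTranspose_mul_mul_same J

lemma trace_mul_conj_conj (P U : Matrix ι ι ℂ) (J : Matrix ι ι' ℂ) (A : Matrix ι' ι' ℂ) :
    (P * (U * (J * A * Jᴴ) * Uᴴ)).trace = (Jᴴ * (Uᴴ * P * U) * J * A).trace := by
  rw [show P * (U * (J * A * Jᴴ) * Uᴴ) = (P * U * J * A) * (Jᴴ * Uᴴ) by
      simp only [Matrix.mul_assoc], trace_mul_comm]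
  simp only [Matrix.mul_assoc]

lemma conjTranspose_mul_conj_isStarProjection_mul_nonneg {P : Matrix ι ι ℂ}
    (hP : IsStarProjection P) (U : Matrix ι ι ℂ) (J : Matrix ι ι' ℂ) :
    0 ≤ Jᴴ * (Uᴴ * P * U) * J := by
  simpa only [Matrix.mul_zero, Matrix.zero_mul, conjTranspose_mul, Matrix.mul_assoc] using
    conjTranspose_mul_mul_le_conjTranspose_mul_mul hP.nonneg (U * J)

lemma conjTranspose_mul_conj_isStarProjection_mul_le [DecidableEq ι] [DecidableEq ι']
    {P U : Matrix ι ι ℂ} {J : Matrix ι ι' ℂ} (hP : IsStarProjection P) (hPJ : P * J = 0)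
    (hJ : Jᴴ * J = 1) {c : ℝ} (hU : (U - 1)ᴴ * (U - 1) ≤ (c : ℂ) • 1) :
    Jᴴ * (Uᴴ * P * U) * J ≤ (c : ℂ) • 1 := by
  have hJP : Jᴴ * P = 0 := by
    rw [← hP.isSelfAdjoint.star_eq, star_eq_conjTranspose, ← conjTranspose_mul, hPJ,
      conjTranspose_zero]
  have hP1 : P ≤ 1 := sub_nonneg.mp hP.one_sub.nonneg
  calc Jᴴ * (Uᴴ * P * U) * J = ((U - 1) * J)ᴴ * P * ((U - 1) * J) := by
        simp only [conjTranspose_mul, conjTranspose_sub, Matrix.sub_mul, Matrix.mul_sub,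
          Matrix.one_mul, ← Matrix.mul_assoc, hJP]
        simp only [Matrix.mul_assoc, hPJ]
        simp
    _ ≤ ((U - 1) * J)ᴴ * 1 * ((U - 1) * J) :=
        conjTranspose_mul_mul_le_conjTranspose_mul_mul hP1 _
    _ = Jᴴ * ((U - 1)ᴴ * (U - 1)) * J := by
        simp only [conjTranspose_mul, Matrix.mul_one, Matrix.mul_assoc]
    _ ≤ Jᴴ * ((c : ℂ) • 1) * J := conjTranspose_mul_mul_le_conjTranspose_mul_mul hU J
    _ = (c : ℂ) • 1 := by rw [Matrix.mul_smul, Matrix.mul_one, Matrix.smul_mul, hJ]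

end Compression

lemma trace_mul_le_mul_trace_posPart' {ι : Type*} [Fintype ι] [DecidableEq ι]
    {M D : Matrix ι ι ℂ} (hD : D.IsHermitian) {c : ℝ} (hM0 : 0 ≤ M) (hMc : M ≤ (c : ℂ) • 1) :
    (M * D).trace ≤ c * (posPart' D hD).trace := by
  set W : Matrix ι ι ℂ := (hD.eigenvectorUnitary : Matrix ι ι ℂ)
  have hWW : Wᴴ * W = 1 := Unitary.star_mul_self_of_mem hD.eigenvectorUnitary.2
  set N := Wᴴ * M * W
  have hN0 : 0 ≤ N := by
    simpa using conjTranspose_mul_mul_le_conjTranspose_mul_mul hM0 W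
  have hNc : N ≤ (c : ℂ) • 1 := by
    simpa [Matrix.mul_smul, Matrix.smul_mul, hWW] using
      conjTranspose_mul_mul_le_conjTranspose_mul_mul hMc W
  have htrace : (M * D).trace = ∑ i, (hD.eigenvalues i : ℂ) * N i i := by
    conv_lhs => rw [hD.spectral_theorem]
    rw [Unitary.conjStarAlgAut_apply, ← Matrix.mul_assoc, ← Matrix.mul_assoc, trace_mul_cycle]
    simp only [trace, diag_apply, mul_diagonal, Function.comp_apply]
    exact Finset.sum_congr rfl fun i _ => by rw [mul_comm, ← Matrix.mul_assoc]; rfl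
  have htrace_pos : (posPart' D hD).trace = ∑ i, ((max (hD.eigenvalues i) 0 : ℝ) : ℂ) := by
    rw [posPart', trace_mul_cycle, Unitary.star_mul_self_of_mem hD.eigenvectorUnitary.2,
      Matrix.one_mul, trace_diagonal]
  rw [htrace, htrace_pos, Finset.mul_sum]
  refine Finset.sum_le_sum fun i _ => Complex.mul_le_mul_max_zero ?_ ?_
  · exact hN0.posSemidef.diag_nonneg
  · simpa using (le_iff.mp hNc).diag_nonneg (i := i)

section Ancilla

variable {ι κ : Type*} [DecidableEq ι] [DecidableEq κ]

variable (ι) in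
/-- The isometry `|ψ⟩ ↦ |ψ⟩ ⊗ |k⟩`. -/
def tensorKet (k : κ) : Matrix (ι × κ) ι ℂ := of fun p j => if p = (j, k) then 1 else 0

variable [Fintype ι]

lemma conjTranspose_tensorKet_mul_tensorKet [Fintype κ] (k : κ) :
    (tensorKet ι k)ᴴ * tensorKet ι k = 1 := by
  ext i j
  simp [tensorKet, mul_apply, one_apply, eq_comm]

lemma kronecker_single_eq_tensorKet_mul_mul (A : Matrix ι ι ℂ) (k : κ) :
    A ⊗ₖ (single k k 1 : Matrix κ κ ℂ) = tensorKet ι k * A * (tensorKet ι k)ᴴ := by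
  ext ⟨i, a⟩ ⟨j, b⟩
  by_cases ha : a = k <;> by_cases hb : b = k <;>
    simp [tensorKet, mul_apply, ha, hb, eq_comm (a := k)]

lemma one_kronecker_single_mul_tensorKet [Fintype κ] {k l : κ} (h : l ≠ k) :
    ((1 : Matrix ι ι ℂ) ⊗ₖ (single l l 1 : Matrix κ κ ℂ)) * tensorKet ι k = 0 := by
  ext ⟨i, a⟩ j
  simp [tensorKet, mul_apply, single_apply, h]

lemma isStarProjection_one_kronecker_single [Fintype κ] (l : κ) :
    IsStarProjection ((1 : Matrix ι ι ℂ) ⊗ₖ (single l l 1 : Matrix κ κ ℂ)) := by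
  constructor
  · rw [IsIdempotentElem, ← mul_kronecker_mul, Matrix.one_mul, single_mul_single_same,
      mul_one]
  · rw [IsSelfAdjoint, star_eq_conjTranspose, conjTranspose_kronecker, conjTranspose_one,
      conjTranspose_single, star_one]

omit [Fintype ι] in
lemma one_kronecker_single_zero_eq_one_sub :
    (1 : Matrix ι ι ℂ) ⊗ₖ (single 0 0 1 : Matrix (Fin 2) (Fin 2) ℂ) =
      1 - (1 : Matrix ι ι ℂ) ⊗ₖ (single 1 1 1 : Matrix (Fin 2) (Fin 2) ℂ) := by
  rw [eq_sub_iff_add_eq, ← kronecker_add, ← one_kronecker_one]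
  congr 1
  ext a b
  fin_cases a <;> fin_cases b <;> simp

/-- `tr (transitionOperator U * ρ)` is the probability of reading the ancilla in `|1⟩` after
evolving `ρ ⊗ |0⟩⟨0|` by `U`. -/
def transitionOperator (U : Matrix (ι × Fin 2) (ι × Fin 2) ℂ) : Matrix ι ι ℂ :=
  (tensorKet ι (0 : Fin 2))ᴴ * (Uᴴ * ((1 : Matrix ι ι ℂ) ⊗ₖ single 1 1 1) * U) *
    tensorKet ι (0 : Fin 2)

lemma transitionOperator_nonneg (U : Matrix (ι × Fin 2) (ι × Fin 2) ℂ) :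
    0 ≤ transitionOperator U :=
  conjTranspose_mul_conj_isStarProjection_mul_nonneg
    (isStarProjection_one_kronecker_single 1) U _

lemma transitionOperator_le {U : Matrix (ι × Fin 2) (ι × Fin 2) ℂ} {c : ℝ}
    (hU : (U - 1)ᴴ * (U - 1) ≤ (c : ℂ) • 1) : transitionOperator U ≤ (c : ℂ) • 1 :=
  conjTranspose_mul_conj_isStarProjection_mul_le (isStarProjection_one_kronecker_single 1)
    (one_kronecker_single_mul_tensorKet one_ne_zero) (conjTranspose_tensorKet_mul_tensorKet 0) hU

lemma success_probability_eq {U : Matrix (ι × Fin 2) (ι × Fin 2) ℂ} (hU : Uᴴ * U = 1)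
    (ρ₀ ρ₁ : Matrix ι ι ℂ) (p₀ p₁ : ℂ) :
    p₀ * (((1 : Matrix ι ι ℂ) ⊗ₖ single (0 : Fin 2) 0 (1 : ℂ)) *
          (U * (ρ₀ ⊗ₖ single (0 : Fin 2) 0 (1 : ℂ)) * Uᴴ)).trace +
        p₁ * (((1 : Matrix ι ι ℂ) ⊗ₖ single (1 : Fin 2) 1 (1 : ℂ)) *
          (U * (ρ₁ ⊗ₖ single (0 : Fin 2) 0 (1 : ℂ)) * Uᴴ)).trace =
      p₀ * ρ₀.trace + (transitionOperator U * (p₁ • ρ₁ - p₀ • ρ₀)).trace := by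
  have h₀ : (tensorKet ι (0 : Fin 2))ᴴ * (Uᴴ * ((1 : Matrix ι ι ℂ) ⊗ₖ single 0 0 1) * U) *
      tensorKet ι (0 : Fin 2) = 1 - transitionOperator U := by
    rw [transitionOperator, one_kronecker_single_zero_eq_one_sub, Matrix.mul_sub,
      Matrix.sub_mul, Matrix.mul_one, hU, Matrix.mul_sub, Matrix.sub_mul, Matrix.mul_one,
      conjTranspose_tensorKet_mul_tensorKet]
  rw [kronecker_single_eq_tensorKet_mul_mul ρ₀, kronecker_single_eq_tensorKet_mul_mul ρ₁,
    trace_mul_conj_conj, trace_mul_conj_conj, h₀, ← transitionOperator]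
  simp only [Matrix.sub_mul, Matrix.mul_sub, Matrix.one_mul, trace_sub, Matrix.mul_smul,
    trace_smul, smul_eq_mul]
  ring

end Ancilla

end Matrix

theorem proto_two_state_bound_general {d : ℕ}
    (ρmax ρmin : Matrix (Fin d) (Fin d) ℂ)
    (htrmax : ρmax.trace = 1)
    (pmax pmin : ℝ)
    (t : ℝ)
    (E : Fin d × Fin 2 → ℝ)
    (v : Fin d × Fin 2 → Fin d × Fin 2 → ℂ)
    (hv : ∀ i j, star (v i) ⬝ᵥ v j = if i = j then 1 else 0)
    (H : Matrix (Fin d × Fin 2) (Fin d × Fin 2) ℂ)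
    (hH : H = ∑ n, (E n : ℂ) • vecMulVec (v n) (star (v n)))
    (U : Matrix (Fin d × Fin 2) (Fin d × Fin 2) ℂ)
    (hU : U = NormedSpace.exp ((-(Complex.I * (t : ℂ))) • H))
    (Cmax : ℝ)
    (hC2 : ∀ n, 1 - Real.cos (t * E n) ≤ 1 - Real.cos (t * Cmax))
    (hD : ((pmin : ℂ) • ρmin - (pmax : ℂ) • ρmax).IsHermitian) :
    (pmax : ℂ) * (((1 : Matrix (Fin d) (Fin d) ℂ) ⊗ₖ Matrix.single (0 : Fin 2) 0 (1 : ℂ)) *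
          (U * (ρmax ⊗ₖ Matrix.single (0 : Fin 2) 0 (1 : ℂ)) * Uᴴ)).trace +
      (pmin : ℂ) * (((1 : Matrix (Fin d) (Fin d) ℂ) ⊗ₖ Matrix.single (1 : Fin 2) 1 (1 : ℂ)) *
          (U * (ρmin ⊗ₖ Matrix.single (0 : Fin 2) 0 (1 : ℂ)) * Uᴴ)).trace ≤
    (pmax : ℂ) + ((2 * (1 - Real.cos (t * Cmax)) : ℝ) : ℂ) *
      (posPart' ((pmin : ℂ) • ρmin - (pmax : ℂ) • ρmax) hD).trace := by
  set c : ℝ := 2 * (1 - Real.cos (t * Cmax))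
  set u : unitaryGroup (Fin d × Fin 2) ℂ := ⟨_, of_columns_mem_unitaryGroup hv⟩
  set g : Fin d × Fin 2 → ℂ := fun n => Complex.exp (-(Complex.I * t) * E n)
  have hg : ∀ n, g n = Complex.exp (-(Complex.I * ↑(t * E n))) := fun n => by
    simp only [g, Complex.ofReal_mul, neg_mul, mul_assoc]
  have hUg : U = Unitary.conjStarAlgAut ℂ _ u (diagonal g) := by
    rw [hU, hH, exp_smul_sum_smul_vecMulVec hv]
  have hUU : Uᴴ * U = 1 := by
    rw [hUg, ← star_eq_conjTranspose, ← mem_unitaryGroup_iff']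
    exact conjStarAlgAut_diagonal_mem_unitaryGroup u fun n => by
      rw [hg, Complex.norm_exp]; simp
  have hU1 : (U - 1)ᴴ * (U - 1) ≤ (c : ℂ) • 1 := by
    rw [hUg]
    refine conjTranspose_mul_self_conjStarAlgAut_diagonal_sub_one_le u fun n => ?_
    rw [hg, Complex.norm_exp_neg_I_mul_sub_one_sq]
    linarith [hC2 n]
  rw [success_probability_eq hUU, htrmax, mul_one]
  exact add_le_add_right
    (trace_mul_le_mul_trace_posPart' hD (transitionOperator_nonneg U) (transitionOperator_le hU1)) _

/-- Proto-bound for time-limited two-state discrimination: with the ancilla (basis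
`{|0⟩ = |x_max⟩, |1⟩ = |x_min⟩}`) initialized to `|x_max⟩`, joint Hamiltonian
`H = ∑ₙ Eₙ|Eₙ⟩⟨Eₙ| ≥ 0`, and `U = exp(-iHt)`, the success probability is at most
`p_max + 2(1 - cos(t C_max)) tr((p_min ρ_min - p_max ρ_max)⁺)`, where `C_max`
maximizes `1 - cos(t Eₙ)` over the eigenvalues of `H`. -/
theorem proto_two_state_bound {d : ℕ}
    (ρmax ρmin : Matrix (Fin d) (Fin d) ℂ)
    (hρmax : ρmax.PosSemidef) (hρmin : ρmin.PosSemidef)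
    (htrmax : ρmax.trace = 1) (htrmin : ρmin.trace = 1)
    (pmax pmin : ℝ) (h0 : 0 ≤ pmin) (hp : pmin ≤ pmax) (hsum : pmax + pmin = 1)
    (t : ℝ) (ht : 0 ≤ t)
    (E : Fin d × Fin 2 → ℝ) (hE : ∀ n, 0 ≤ E n)
    (v : Fin d × Fin 2 → Fin d × Fin 2 → ℂ)
    (hv : ∀ i j, star (v i) ⬝ᵥ v j = if i = j then 1 else 0)
    (H : Matrix (Fin d × Fin 2) (Fin d × Fin 2) ℂ)
    (hH : H = ∑ n, (E n : ℂ) • vecMulVec (v n) (star (v n)))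
    (U : Matrix (Fin d × Fin 2) (Fin d × Fin 2) ℂ)
    (hU : U = NormedSpace.exp ((-(Complex.I * (t : ℂ))) • H))
    (Cmax : ℝ) (hC1 : ∃ n, Cmax = E n)
    (hC2 : ∀ n, 1 - Real.cos (t * E n) ≤ 1 - Real.cos (t * Cmax))
    (hD : ((pmin : ℂ) • ρmin - (pmax : ℂ) • ρmax).IsHermitian) :
    (pmax : ℂ) * (((1 : Matrix (Fin d) (Fin d) ℂ) ⊗ₖ Matrix.single (0 : Fin 2) 0 (1 : ℂ)) *
          (U * (ρmax ⊗ₖ Matrix.single (0 : Fin 2) 0 (1 : ℂ)) * Uᴴ)).trace +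
      (pmin : ℂ) * (((1 : Matrix (Fin d) (Fin d) ℂ) ⊗ₖ Matrix.single (1 : Fin 2) 1 (1 : ℂ)) *
          (U * (ρmin ⊗ₖ Matrix.single (0 : Fin 2) 0 (1 : ℂ)) * Uᴴ)).trace ≤
    (pmax : ℂ) + ((2 * (1 - Real.cos (t * Cmax)) : ℝ) : ℂ) *
      (posPart' ((pmin : ℂ) • ρmin - (pmax : ℂ) • ρmax) hD).trace :=
  proto_two_state_bound_general ρmax ρmin htrmax pmax pmin t E v hv H hH U hU Cmax hC2 hD
end

section
/- Under the time-limited two-state discrimination setup with equal priors p₀ = p₁ = 1/2, the success probability satisfies P_succ ≤ 1/2 + (γ t ‖H‖_∞ / 2)·D(ρ₀,ρ₁), where D(ρ₀,ρ₁) = (1/2)‖ρ₀ - ρ₁‖₁ is the trace distance and γ = 3/π (or 5/π if some t·Eₙ ∈ (1,4)). -/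
open Matrix ComplexOrder

/-- The absolute value `|A|` of a Hermitian matrix `A`, obtained from its spectral
decomposition by taking absolute values of the eigenvalues. -/
noncomputable def absPart' {ι : Type*} [Fintype ι] [DecidableEq ι]
    (A : Matrix ι ι ℂ) (hA : A.IsHermitian) : Matrix ι ι ℂ :=
  (hA.eigenvectorUnitary : Matrix ι ι ℂ) *
    Matrix.diagonal (fun i => ((|hA.eigenvalues i| : ℝ) : ℂ)) *
    star (hA.eigenvectorUnitary : Matrix ι ι ℂ)
open Kronecker

/-!
Write `ρ₀ - ρ₁ = ∑ᵢ λᵢ |wᵢ⟩⟨wᵢ|`. Since the two ancilla projectors sum to the identity and `U` is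
unitary, `2 P_succ = 1 - ∑ᵢ λᵢ pᵢ`, where `pᵢ` is the probability that `U` flips the ancilla of
`wᵢ ⊗ |0⟩`. Trivially `pᵢ ≤ 1`; and since every eigenphase `e^{-itEₙ}` lies within `t‖H‖/2` of
`e^{-it‖H‖/2}`, while `U - e^{-it‖H‖/2}` has the same `|1⟩`-component on `wᵢ ⊗ |0⟩` as `U`,
also `pᵢ ≤ (t‖H‖/2)²`. Together, `pᵢ ≤ (3/π) t‖H‖`. Finally `∑ᵢ λᵢ = 0`, so
`-∑ᵢ λᵢ pᵢ ≤ maxᵢ pᵢ · ∑ᵢ |λᵢ| / 2`.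
-/

open Complex

section Kronecker

variable {l m n p ι α : Type*} [CommRing α]

theorem Matrix.sum_kronecker (s : Finset ι) (A : ι → Matrix l m α) (B : Matrix n p α) :
    (∑ i ∈ s, A i) ⊗ₖ B = ∑ i ∈ s, A i ⊗ₖ B :=
  map_sum ((kroneckerBilinear (R := α) (α := α)).flip B) A s

theorem Matrix.sub_kronecker (A₁ A₂ : Matrix l m α) (B : Matrix n p α) :
    (A₁ - A₂) ⊗ₖ B = A₁ ⊗ₖ B - A₂ ⊗ₖ B :=
  map_sub ((kroneckerBilinear (R := α) (α := α)).flip B) A₁ A₂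

end Kronecker

section Conjugation

variable {ι : Type*} [Fintype ι]

lemma star_dotProduct_self_eq_sum_normSq (x : ι → ℂ) :
    star x ⬝ᵥ x = ((∑ i, normSq (x i) : ℝ) : ℂ) := by
  push_cast
  simp [dotProduct, normSq_eq_conj_mul_self]

lemma conj_vecMulVec_star (B : Matrix ι ι ℂ) (x : ι → ℂ) :
    B * vecMulVec x (star x) * Bᴴ = vecMulVec (B *ᵥ x) (star (B *ᵥ x)) := by
  rw [mul_vecMulVec, vecMulVec_mul, star_mulVec]

variable [DecidableEq ι]

lemma sum_normSq_diagonal_mulVec_le {g : ι → ℂ} {r : ℝ} (hg : ∀ n, ‖g n‖ ≤ r) (x : ι → ℂ) :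
    ∑ i, normSq ((diagonal g *ᵥ x) i) ≤ r ^ 2 * ∑ i, normSq (x i) := by
  rw [Finset.mul_sum]
  refine Finset.sum_le_sum fun i _ => ?_
  rw [mulVec_diagonal, normSq_mul, ← Complex.sq_norm]
  exact mul_le_mul_of_nonneg_right (pow_le_pow_left₀ (norm_nonneg _) (hg i) 2) (normSq_nonneg _)

lemma sum_smul_vecMulVec_eq_conj_diagonal (v : ι → ι → ℂ) (c : ι → ℂ) :
    ∑ n, c n • vecMulVec (v n) (star (v n))
      = of (fun i n => v n i) * diagonal c * (of fun i n => v n i)ᴴ := by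
  ext i j
  rw [Matrix.mul_assoc, mul_apply]
  simp only [Matrix.sum_apply, Matrix.smul_apply, vecMulVec_apply, Pi.star_apply, smul_eq_mul,
    of_apply, diagonal_mul, conjTranspose_apply]
  exact Finset.sum_congr rfl fun n _ => by ring

lemma conjTranspose_mul_self_of_orthonormal {v : ι → ι → ℂ}
    (hv : ∀ i j, star (v i) ⬝ᵥ v j = if i = j then 1 else 0) :
    (of fun i n => v n i)ᴴ * of (fun i n => v n i) = 1 := by
  ext i j
  simpa [mul_apply, one_apply, dotProduct] using hv i j

lemma sum_normSq_mulVec_of_conjTranspose_mul_self {V : Matrix ι ι ℂ} (hV : Vᴴ * V = 1)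
    (x : ι → ℂ) : ∑ i, normSq ((V *ᵥ x) i) = ∑ i, normSq (x i) := by
  have h : star (V *ᵥ x) ⬝ᵥ (V *ᵥ x) = star x ⬝ᵥ x := by
    rw [star_mulVec, dotProduct_mulVec, vecMul_vecMul, hV, vecMul_one]
  rw [star_dotProduct_self_eq_sum_normSq, star_dotProduct_self_eq_sum_normSq] at h
  exact_mod_cast h

lemma sum_normSq_col_of_conjTranspose_mul_self {V : Matrix ι ι ℂ} (hV : Vᴴ * V = 1) (i : ι) :
    ∑ a, normSq (V a i) = 1 := by
  simpa [mulVec_single, Pi.single_apply, apply_ite normSq] using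
    sum_normSq_mulVec_of_conjTranspose_mul_self hV (Pi.single i 1)

lemma sum_normSq_conj_diagonal_mulVec_le {V : Matrix ι ι ℂ} (hV : Vᴴ * V = 1) {g : ι → ℂ}
    {r : ℝ} (hg : ∀ n, ‖g n‖ ≤ r) (x : ι → ℂ) :
    ∑ i, normSq (((V * diagonal g * Vᴴ) *ᵥ x) i) ≤ r ^ 2 * ∑ i, normSq (x i) := by
  have hV' : Vᴴᴴ * Vᴴ = 1 := by rw [conjTranspose_conjTranspose, mul_eq_one_comm.mp hV]
  calc ∑ i, normSq (((V * diagonal g * Vᴴ) *ᵥ x) i)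
      = ∑ i, normSq ((diagonal g *ᵥ (Vᴴ *ᵥ x)) i) := by
        rw [← mulVec_mulVec, ← mulVec_mulVec, sum_normSq_mulVec_of_conjTranspose_mul_self hV]
    _ ≤ r ^ 2 * ∑ i, normSq ((Vᴴ *ᵥ x) i) := sum_normSq_diagonal_mulVec_le hg _
    _ = r ^ 2 * ∑ i, normSq (x i) := by rw [sum_normSq_mulVec_of_conjTranspose_mul_self hV']

lemma conj_diagonal_conjTranspose_mul_self {V : Matrix ι ι ℂ} (hV : Vᴴ * V = 1) {g : ι → ℂ}
    (hg : ∀ n, ‖g n‖ = 1) : (V * diagonal g * Vᴴ)ᴴ * (V * diagonal g * Vᴴ) = 1 := by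
  have hg' : (fun n => star (g n) * g n) = fun _ => 1 := funext fun n => by
    rw [RCLike.star_def, ← normSq_eq_conj_mul_self, ← Complex.sq_norm, hg n]
    simp
  simp only [conjTranspose_mul, conjTranspose_conjTranspose, diagonal_conjTranspose,
    Matrix.mul_assoc]
  rw [← Matrix.mul_assoc Vᴴ V, hV, Matrix.one_mul, ← Matrix.mul_assoc (diagonal _),
    diagonal_mul_diagonal, Pi.star_def, hg', diagonal_one, Matrix.one_mul, mul_eq_one_comm.mp hV]

lemma exp_conj_diagonal {V : Matrix ι ι ℂ} (hV : Vᴴ * V = 1) (c : ι → ℂ) :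
    NormedSpace.exp (V * diagonal c * Vᴴ) = V * diagonal (fun n => cexp (c n)) * Vᴴ := by
  have hVinv : V⁻¹ = Vᴴ := inv_eq_left_inv hV
  rw [← hVinv, Matrix.exp_conj V _ (IsUnit.of_mul_eq_one_right Vᴴ hV), exp_diagonal]
  congr
  funext n
  rw [Pi.coe_exp, ← Complex.exp_eq_exp_ℂ]

lemma exp_smul_sum_smul_vecMulVec_of_orthonormal {v : ι → ι → ℂ}
    (hv : ∀ i j, star (v i) ⬝ᵥ v j = if i = j then 1 else 0) (z : ℂ) (E : ι → ℂ) :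
    NormedSpace.exp (z • ∑ n, E n • vecMulVec (v n) (star (v n)))
      = of (fun i n => v n i) * diagonal (fun n => cexp (z * E n)) * (of fun i n => v n i)ᴴ := by
  simp only [Finset.smul_sum, smul_smul]
  rw [sum_smul_vecMulVec_eq_conj_diagonal,
    exp_conj_diagonal (conjTranspose_mul_self_of_orthonormal hv)]

lemma Matrix.IsHermitian.eq_sum_eigenvalues_smul_vecMulVec {A : Matrix ι ι ℂ}
    (hA : A.IsHermitian) :
    A = ∑ i, (hA.eigenvalues i : ℂ) •
      vecMulVec (fun a => (hA.eigenvectorUnitary : Matrix ι ι ℂ) a i)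
        (star fun a => (hA.eigenvectorUnitary : Matrix ι ι ℂ) a i) := by
  rw [sum_smul_vecMulVec_eq_conj_diagonal]
  exact hA.spectral_theorem

lemma Matrix.IsHermitian.sum_eigenvalues_eq_zero {A : Matrix ι ι ℂ} (hA : A.IsHermitian)
    (htr : A.trace = 0) : ∑ i, hA.eigenvalues i = 0 := by
  rwa [hA.trace_eq_sum_eigenvalues, ← RCLike.ofReal_sum, RCLike.ofReal_eq_zero] at htr

end Conjugation

lemma norm_cexp_neg_I_mul (t E : ℝ) : ‖cexp (-(I * t) * E)‖ = 1 := by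
  simp [Complex.norm_exp]

lemma norm_cexp_neg_I_mul_sub_le {t E Emax : ℝ} (ht : 0 ≤ t) (hE : 0 ≤ E) (hEmax : E ≤ Emax) :
    ‖cexp (-(I * t) * E) - cexp (-(I * t) * (Emax / 2 : ℝ))‖ ≤ t * Emax / 2 := by
  have hsplit : cexp (-(I * t) * E) - cexp (-(I * t) * (Emax / 2 : ℝ))
      = cexp (-(I * t) * (Emax / 2 : ℝ)) * (cexp (I * (t * (Emax / 2 - E) : ℝ)) - 1) := by
    rw [mul_sub, ← Complex.exp_add, mul_one]
    push_cast
    ring_nf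
  rw [hsplit, norm_mul, norm_cexp_neg_I_mul, one_mul]
  refine Real.norm_exp_I_mul_ofReal_sub_one_le.trans ?_
  rw [Real.norm_eq_abs, abs_mul, abs_of_nonneg ht]
  have : |Emax / 2 - E| ≤ Emax / 2 := abs_le.mpr ⟨by linarith, by linarith⟩
  nlinarith

lemma min_one_sq_half_le_three_div_pi_mul {x : ℝ} (hx : 0 ≤ x) :
    min 1 ((x / 2) ^ 2) ≤ 3 / Real.pi * x := by
  have hpi := Real.pi_pos
  have hpi4 := Real.pi_le_four
  rcases le_or_gt (x * Real.pi) 12 with h | h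
  · refine (min_le_right _ _).trans ?_
    rw [div_mul_eq_mul_div, div_pow, div_le_div_iff₀ (by norm_num) hpi]
    nlinarith [mul_le_mul_of_nonneg_right h hx]
  · refine (min_le_left _ _).trans ?_
    rw [div_mul_eq_mul_div, le_div_iff₀ hpi]
    nlinarith

lemma neg_sum_mul_le_of_sum_eq_zero {ι : Type*} {s : Finset ι} {c T : ι → ℝ} {B : ℝ}
    (hc : ∑ i ∈ s, c i = 0) (hT₀ : ∀ i ∈ s, 0 ≤ T i) (hTB : ∀ i ∈ s, T i ≤ B) :
    -∑ i ∈ s, c i * T i ≤ B * (∑ i ∈ s, |c i|) / 2 := by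
  have hpt : ∀ i ∈ s, -(c i * T i) ≤ B * (|c i| - c i) / 2 := fun i hi => by
    rcases le_or_gt 0 (c i) with h | h
    · rw [abs_of_nonneg h]
      nlinarith [mul_nonneg h (hT₀ i hi)]
    · rw [abs_of_neg h]
      nlinarith [hTB i hi]
  calc -∑ i ∈ s, c i * T i = ∑ i ∈ s, -(c i * T i) := by rw [Finset.sum_neg_distrib]
    _ ≤ ∑ i ∈ s, B * (|c i| - c i) / 2 := Finset.sum_le_sum hpt
    _ = B * (∑ i ∈ s, |c i|) / 2 := by
        rw [← Finset.sum_div, ← Finset.mul_sum, Finset.sum_sub_distrib, hc, sub_zero]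

section Ancilla

variable {κ : Type*}

/-- The joint vector `w ⊗ |0⟩`. -/
def tensorKetZero (w : κ → ℂ) : κ × Fin 2 → ℂ := fun p => if p.2 = 0 then w p.1 else 0

lemma tensorKetZero_apply_one (w : κ → ℂ) (a : κ) : tensorKetZero w (a, 1) = 0 := rfl

lemma kronecker_single_zero_vecMulVec (w : κ → ℂ) :
    vecMulVec w (star w) ⊗ₖ single (0 : Fin 2) (0 : Fin 2) (1 : ℂ)
      = vecMulVec (tensorKetZero w) (star (tensorKetZero w)) := by
  ext ⟨a, b⟩ ⟨c, e⟩
  fin_cases b <;> fin_cases e <;> simp [tensorKetZero, vecMulVec_apply, single]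

lemma one_kronecker_single_add_one_kronecker_single [DecidableEq κ] :
    (1 : Matrix κ κ ℂ) ⊗ₖ single (0 : Fin 2) (0 : Fin 2) (1 : ℂ) +
      (1 : Matrix κ κ ℂ) ⊗ₖ single (1 : Fin 2) (1 : Fin 2) (1 : ℂ) = 1 := by
  ext ⟨a, b⟩ ⟨c, e⟩
  fin_cases b <;> fin_cases e <;> simp [single, one_apply]

variable [Fintype κ]

lemma sum_normSq_tensorKetZero (w : κ → ℂ) :
    ∑ p, normSq (tensorKetZero w p) = ∑ a, normSq (w a) := by
  simp [tensorKetZero, Fintype.sum_prod_type]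

lemma sum_normSq_apply_one_le (y : κ × Fin 2 → ℂ) :
    ∑ a, normSq (y (a, 1)) ≤ ∑ p, normSq (y p) := by
  rw [Fintype.sum_prod_type]
  exact Finset.sum_le_sum fun a _ => by simp [Fin.sum_univ_two, normSq_nonneg]

/-- The probability of reading the ancilla as `|1⟩` after evolving the pure state `x` by `U`. -/
def flipProb (U : Matrix (κ × Fin 2) (κ × Fin 2) ℂ) (x : κ × Fin 2 → ℂ) : ℝ :=
  ∑ a, normSq ((U *ᵥ x) (a, 1))

lemma flipProb_nonneg (U : Matrix (κ × Fin 2) (κ × Fin 2) ℂ) (x : κ × Fin 2 → ℂ) :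
    0 ≤ flipProb U x :=
  Finset.sum_nonneg fun _ _ => normSq_nonneg _

variable [DecidableEq κ]

lemma trace_one_kronecker_single_mul (b : Fin 2) (N : Matrix (κ × Fin 2) (κ × Fin 2) ℂ) :
    ((1 : Matrix κ κ ℂ) ⊗ₖ single b b (1 : ℂ) * N).trace = ∑ a, N (a, b) (a, b) := by
  simp [Matrix.trace, mul_apply, single, one_apply, Fintype.sum_prod_type, ite_and]

lemma trace_one_kronecker_single_one_mul_conj_vecMulVec (U : Matrix (κ × Fin 2) (κ × Fin 2) ℂ)
    (x : κ × Fin 2 → ℂ) :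
    ((1 : Matrix κ κ ℂ) ⊗ₖ single (1 : Fin 2) (1 : Fin 2) (1 : ℂ) *
        (U * vecMulVec x (star x) * Uᴴ)).trace = (flipProb U x : ℂ) := by
  rw [conj_vecMulVec_star, trace_one_kronecker_single_mul, flipProb]
  push_cast
  simp [vecMulVec_apply, mul_conj]

lemma flipProb_le_of_conjTranspose_mul_self {U : Matrix (κ × Fin 2) (κ × Fin 2) ℂ}
    (hU : Uᴴ * U = 1) (x : κ × Fin 2 → ℂ) : flipProb U x ≤ ∑ p, normSq (x p) :=
  (sum_normSq_apply_one_le _).trans (sum_normSq_mulVec_of_conjTranspose_mul_self hU x).le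

/-- When `x` has no `|1⟩` component, neither does `c • x`, so `U x` and `(U - c • 1) x` have the
same `|1⟩` component; and `U - c • 1` has norm at most `r`. -/
lemma flipProb_conj_diagonal_le {V : Matrix (κ × Fin 2) (κ × Fin 2) ℂ} (hV : Vᴴ * V = 1)
    {g : κ × Fin 2 → ℂ} {c : ℂ} {r : ℝ} (hg : ∀ n, ‖g n - c‖ ≤ r) {x : κ × Fin 2 → ℂ}
    (hx : ∀ a, x (a, 1) = 0) :
    flipProb (V * diagonal g * Vᴴ) x ≤ r ^ 2 * ∑ p, normSq (x p) := by
  have hshift : V * diagonal (fun n => g n - c) * Vᴴ = V * diagonal g * Vᴴ - c • 1 := by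
    have : diagonal (fun n => g n - c) = diagonal g - c • 1 := by
      ext i j
      by_cases h : i = j <;> simp [diagonal, h, one_apply]
    rw [this, Matrix.mul_sub, Matrix.sub_mul, Matrix.mul_smul, Matrix.smul_mul, Matrix.mul_one,
      mul_eq_one_comm.mp hV]
  have hflip : flipProb (V * diagonal g * Vᴴ) x
      = flipProb (V * diagonal (fun n => g n - c) * Vᴴ) x := by
    simp [flipProb, hshift, sub_mulVec, smul_mulVec, hx]
  rw [hflip]
  exact (sum_normSq_apply_one_le _).trans (sum_normSq_conj_diagonal_mulVec_le hV hg x)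

lemma flipProb_evolution_le {V : Matrix (κ × Fin 2) (κ × Fin 2) ℂ} (hV : Vᴴ * V = 1)
    {t Emax : ℝ} {E : κ × Fin 2 → ℝ} (ht : 0 ≤ t) (hE : ∀ n, 0 ≤ E n) (hEmax : ∀ n, E n ≤ Emax)
    (hEmax₀ : 0 ≤ Emax) {x : κ × Fin 2 → ℂ} (hx : ∀ a, x (a, 1) = 0)
    (hx₁ : ∑ p, normSq (x p) = 1) :
    flipProb (V * diagonal (fun n => cexp (-(I * t) * E n)) * Vᴴ) x
      ≤ 3 / Real.pi * (t * Emax) := by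
  have hunit := flipProb_le_of_conjTranspose_mul_self
    (conj_diagonal_conjTranspose_mul_self hV fun n => norm_cexp_neg_I_mul t (E n)) x
  have hphase := flipProb_conj_diagonal_le hV
    (fun n => norm_cexp_neg_I_mul_sub_le ht (hE n) (hEmax n)) hx
  rw [hx₁] at hunit hphase
  rw [mul_one] at hphase
  exact (le_min hunit hphase).trans
    (min_one_sq_half_le_three_div_pi_mul (mul_nonneg ht hEmax₀))

end Ancilla

section Success

variable {κ ι : Type*} [Fintype κ] [DecidableEq κ] [Fintype ι]

lemma trace_one_kronecker_single_one_mul_conj_kronecker {U : Matrix (κ × Fin 2) (κ × Fin 2) ℂ}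
    {σ : Matrix κ κ ℂ} {c : ι → ℝ} {w : ι → κ → ℂ}
    (hσ : σ = ∑ i, (c i : ℂ) • vecMulVec (w i) (star (w i))) :
    ((1 : Matrix κ κ ℂ) ⊗ₖ single (1 : Fin 2) (1 : Fin 2) (1 : ℂ) *
        (U * (σ ⊗ₖ single (0 : Fin 2) (0 : Fin 2) (1 : ℂ)) * Uᴴ)).trace
      = ((∑ i, c i * flipProb U (tensorKetZero (w i)) : ℝ) : ℂ) := by
  simp only [hσ, sum_kronecker, smul_kronecker, kronecker_single_zero_vecMulVec, Matrix.mul_sum,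
    Matrix.sum_mul, Matrix.mul_smul, Matrix.smul_mul, trace_sum, trace_smul,
    trace_one_kronecker_single_one_mul_conj_vecMulVec]
  push_cast
  rfl

lemma trace_success_eq {U : Matrix (κ × Fin 2) (κ × Fin 2) ℂ} (hU : Uᴴ * U = 1)
    {ρ₀ ρ₁ : Matrix κ κ ℂ} (htr₀ : ρ₀.trace = 1) {c : ι → ℝ} {w : ι → κ → ℂ}
    (hρ : ρ₀ - ρ₁ = ∑ i, (c i : ℂ) • vecMulVec (w i) (star (w i))) :
    ((1 : Matrix κ κ ℂ) ⊗ₖ single (0 : Fin 2) (0 : Fin 2) (1 : ℂ) *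
          (U * (ρ₀ ⊗ₖ single (0 : Fin 2) (0 : Fin 2) (1 : ℂ)) * Uᴴ)).trace +
        ((1 : Matrix κ κ ℂ) ⊗ₖ single (1 : Fin 2) (1 : Fin 2) (1 : ℂ) *
          (U * (ρ₁ ⊗ₖ single (0 : Fin 2) (0 : Fin 2) (1 : ℂ)) * Uᴴ)).trace
      = 1 - ((∑ i, c i * flipProb U (tensorKetZero (w i)) : ℝ) : ℂ) := by
  have htrU : (U * (ρ₀ ⊗ₖ single (0 : Fin 2) (0 : Fin 2) (1 : ℂ)) * Uᴴ).trace = 1 := by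
    rw [trace_mul_cycle, hU, Matrix.one_mul, trace_kronecker, htr₀, trace_single_eq_same,
      one_mul]
  rw [← trace_one_kronecker_single_one_mul_conj_kronecker hρ,
    eq_sub_of_add_eq one_kronecker_single_add_one_kronecker_single, Matrix.sub_mul,
    Matrix.one_mul, trace_sub, htrU, sub_kronecker, Matrix.mul_sub, Matrix.sub_mul,
    Matrix.mul_sub, trace_sub]
  ring

end Success

lemma trace_absPart' {ι : Type*} [Fintype ι] [DecidableEq ι] {A : Matrix ι ι ℂ}
    (hA : A.IsHermitian) : (absPart' A hA).trace = ((∑ i, |hA.eigenvalues i| : ℝ) : ℂ) := by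
  rw [absPart', trace_mul_cycle, Unitary.coe_star_mul_self, Matrix.one_mul, trace_diagonal]
  push_cast
  rfl

open scoped Classical in
theorem two_state_equal_priors_bound_general {d : ℕ}
    (ρ₀ ρ₁ : Matrix (Fin d) (Fin d) ℂ)
    (htr₀ : ρ₀.trace = 1) (htr₁ : ρ₁.trace = 1)
    (t : ℝ) (ht : 0 ≤ t)
    (E : Fin d × Fin 2 → ℝ) (hE : ∀ n, 0 ≤ E n)
    (v : Fin d × Fin 2 → Fin d × Fin 2 → ℂ)
    (hv : ∀ i j, star (v i) ⬝ᵥ v j = if i = j then 1 else 0)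
    (H : Matrix (Fin d × Fin 2) (Fin d × Fin 2) ℂ)
    (hH : H = ∑ n, (E n : ℂ) • vecMulVec (v n) (star (v n)))
    (U : Matrix (Fin d × Fin 2) (Fin d × Fin 2) ℂ)
    (hU : U = NormedSpace.exp ((-(Complex.I * (t : ℂ))) • H))
    (Emax : ℝ) (hEmax : ∀ n, E n ≤ Emax) (hEmax' : ∃ n, E n = Emax)
    (hA : (ρ₀ - ρ₁).IsHermitian) :
    (1 / 2 : ℂ) * ((((1 : Matrix (Fin d) (Fin d) ℂ) ⊗ₖ Matrix.single (0 : Fin 2) 0 (1 : ℂ)) *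
          (U * (ρ₀ ⊗ₖ Matrix.single (0 : Fin 2) 0 (1 : ℂ)) * Uᴴ)).trace +
        (((1 : Matrix (Fin d) (Fin d) ℂ) ⊗ₖ Matrix.single (1 : Fin 2) 1 (1 : ℂ)) *
          (U * (ρ₁ ⊗ₖ Matrix.single (0 : Fin 2) 0 (1 : ℂ)) * Uᴴ)).trace) ≤
    (1 / 2 : ℂ) +
      (((if ∃ n, 1 < t * E n ∧ t * E n < 4 then 5 / Real.pi else 3 / Real.pi) *
          t * Emax / 2 : ℝ) : ℂ) *
        ((1 / 2 : ℂ) * (absPart' (ρ₀ - ρ₁) hA).trace) := by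
  obtain ⟨n₀, hn₀⟩ := hEmax'
  have hEmax₀ : 0 ≤ Emax := hn₀ ▸ hE n₀
  set V : Matrix (Fin d × Fin 2) (Fin d × Fin 2) ℂ := of fun i n => v n i
  have hV : Vᴴ * V = 1 := conjTranspose_mul_self_of_orthonormal hv
  have hUV : U = V * diagonal (fun n => cexp (-(I * t) * E n)) * Vᴴ := by
    rw [hU, hH, exp_smul_sum_smul_vecMulVec_of_orthonormal hv]
  have hUU : Uᴴ * U = 1 :=
    hUV ▸ conj_diagonal_conjTranspose_mul_self hV fun n => norm_cexp_neg_I_mul t (E n)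
  set W : Matrix (Fin d) (Fin d) ℂ := (hA.eigenvectorUnitary : Matrix (Fin d) (Fin d) ℂ)
  have hflip : ∀ i, flipProb U (tensorKetZero fun a => W a i) ≤ 3 / Real.pi * (t * Emax) :=
    fun i => hUV ▸ flipProb_evolution_le hV ht hE hEmax hEmax₀ (tensorKetZero_apply_one _) <| by
      rw [sum_normSq_tensorKetZero, sum_normSq_col_of_conjTranspose_mul_self
        (Unitary.coe_star_mul_self hA.eigenvectorUnitary)]
  have hcancel := neg_sum_mul_le_of_sum_eq_zero
    (hA.sum_eigenvalues_eq_zero (by rw [trace_sub, htr₀, htr₁, sub_self]))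
    (fun i _ => flipProb_nonneg U _) fun i _ => hflip i
  set γ := if ∃ n, 1 < t * E n ∧ t * E n < 4 then 5 / Real.pi else 3 / Real.pi
  have hγ : 3 / Real.pi ≤ γ := by
    simp only [γ]
    split_ifs <;> gcongr
    norm_num
  have habs : 0 ≤ ∑ i, |hA.eigenvalues i| := Finset.sum_nonneg fun i _ => abs_nonneg _
  rw [trace_success_eq hUU htr₀ hA.eq_sum_eigenvalues_smul_vecMulVec, trace_absPart']
  have hreal : 1 / 2 * (1 - ∑ i, hA.eigenvalues i * flipProb U (tensorKetZero fun a => W a i))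
      ≤ 1 / 2 + γ * t * Emax / 2 * (1 / 2 * ∑ i, |hA.eigenvalues i|) := by
    nlinarith [hcancel, mul_le_mul_of_nonneg_right hγ (mul_nonneg (mul_nonneg ht hEmax₀) habs)]
  convert Complex.real_le_real.mpr hreal using 1 <;> push_cast <;> ring

open scoped Classical in
/-- Time-limited two-state discrimination with equal priors:
`P_succ ≤ 1/2 + (γ t ‖H‖_∞ / 2) D(ρ₀, ρ₁)` where `D(ρ₀,ρ₁) = (1/2)‖ρ₀ - ρ₁‖₁` is the
trace distance, `γ = 3/π` (or `5/π` if some `t Eₙ ∈ (1,4)`). -/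
theorem two_state_equal_priors_bound {d : ℕ}
    (ρ₀ ρ₁ : Matrix (Fin d) (Fin d) ℂ)
    (hρ₀ : ρ₀.PosSemidef) (hρ₁ : ρ₁.PosSemidef)
    (htr₀ : ρ₀.trace = 1) (htr₁ : ρ₁.trace = 1)
    (t : ℝ) (ht : 0 ≤ t)
    (E : Fin d × Fin 2 → ℝ) (hE : ∀ n, 0 ≤ E n)
    (v : Fin d × Fin 2 → Fin d × Fin 2 → ℂ)
    (hv : ∀ i j, star (v i) ⬝ᵥ v j = if i = j then 1 else 0)
    (H : Matrix (Fin d × Fin 2) (Fin d × Fin 2) ℂ)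
    (hH : H = ∑ n, (E n : ℂ) • vecMulVec (v n) (star (v n)))
    (U : Matrix (Fin d × Fin 2) (Fin d × Fin 2) ℂ)
    (hU : U = NormedSpace.exp ((-(Complex.I * (t : ℂ))) • H))
    (Emax : ℝ) (hEmax : ∀ n, E n ≤ Emax) (hEmax' : ∃ n, E n = Emax)
    (hA : (ρ₀ - ρ₁).IsHermitian) :
    (1 / 2 : ℂ) * ((((1 : Matrix (Fin d) (Fin d) ℂ) ⊗ₖ Matrix.single (0 : Fin 2) 0 (1 : ℂ)) *
          (U * (ρ₀ ⊗ₖ Matrix.single (0 : Fin 2) 0 (1 : ℂ)) * Uᴴ)).trace +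
        (((1 : Matrix (Fin d) (Fin d) ℂ) ⊗ₖ Matrix.single (1 : Fin 2) 1 (1 : ℂ)) *
          (U * (ρ₁ ⊗ₖ Matrix.single (0 : Fin 2) 0 (1 : ℂ)) * Uᴴ)).trace) ≤
    (1 / 2 : ℂ) +
      (((if ∃ n, 1 < t * E n ∧ t * E n < 4 then 5 / Real.pi else 3 / Real.pi) *
          t * Emax / 2 : ℝ) : ℂ) *
        ((1 / 2 : ℂ) * (absPart' (ρ₀ - ρ₁) hA).trace) :=
  two_state_equal_priors_bound_general ρ₀ ρ₁ htr₀ htr₁ t ht E hE v hv H hH U hU Emax hEmax hEmax' hA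
end

section
/- (Attainability.) Let ρ₀, ρ₁ be density operators on H_enc given with equal prior probability 1/2, let A := ρ₁ - ρ₀ with positive/negative eigenspace projectors Π₊, Π₋ (Π₊ + Π₋ = I), let H_anc = ℂ² with basis {|0⟩,|1⟩}, and define Ĥ := Π₋⊗I + Π₊⊗(|0⟩⟨1| + |1⟩⟨0|) and H := E_max(Ĥ + I)/2 for E_max ≥ 0. Then H ≥ 0, ‖H‖_∞ ≤ E_max, and evolving ρ̃ₓ = ρₓ⊗|0⟩⟨0| by U = exp(-iHt) followed by the computational-basis measurement of the ancilla yields success probability exactly 1/2 + (1/4)(1 - cos(t·E_max))·D(ρ₀,ρ₁). -/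
/-!
`Ĥ = Π₋ ⊗ 1 + Π₊ ⊗ X` is a self-adjoint involution, so `Q = (Ĥ + 1)/2` is an orthogonal
projection and `H = E_max • Q`. This gives `0 ≤ H ≤ E_max` at once, and, `Q` being idempotent,
`U = 1 + (e^{-i t E_max} - 1) Q`. Since everything is block diagonal for `Π₋ ⊕ Π₊`, `U` only
multiplies the ancilla by a phase on the range of `Π₋`, while on the range of `Π₊` it flips
`|0⟩` to `|1⟩` with probability `(1 - cos (t E_max))/2`. The success probability is therefore
`1/2 + (1 - cos (t E_max))/4 · tr (Π₊ (ρ₁ - ρ₀))`, and `tr (Π₊ A) = ∑_{λ ≥ 0} λ = ½ ∑ |λ|`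
because `tr A = 0`.
-/

open Matrix Kronecker ComplexOrder

theorem IsIdempotentElem.exp_smul {𝕂 𝔸 : Type*} [RCLike 𝕂] [Ring 𝔸] [Algebra 𝕂 𝔸]
    [TopologicalSpace 𝔸] [IsTopologicalRing 𝔸] [ContinuousSMul 𝕂 𝔸] [T2Space 𝔸]
    {p : 𝔸} (hp : IsIdempotentElem p) (z : 𝕂) :
    NormedSpace.exp (z • p) = 1 + (NormedSpace.exp z - 1) • p := by
  have hterm : ∀ n : ℕ, ((n.factorial : 𝕂)⁻¹) • (z • p) ^ n =
      ((n.factorial : 𝕂)⁻¹ • z ^ n) • p + if n = 0 then 1 - p else 0 := by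
    rintro (_ | n)
    · simp
    · rw [smul_pow, hp.pow_succ_eq, smul_smul, if_neg n.succ_ne_zero, add_zero, smul_eq_mul]
  have hscalar : HasSum (fun n : ℕ => (n.factorial : 𝕂)⁻¹ • z ^ n) (NormedSpace.exp z) := by
    rw [NormedSpace.exp_eq_tsum 𝕂]
    exact (NormedSpace.expSeries_summable' (𝕂 := 𝕂) z).hasSum
  rw [NormedSpace.exp_eq_tsum 𝕂]
  dsimp only
  rw [funext hterm, ((hscalar.smul_const p).add (hasSum_ite_eq 0 (1 - p))).tsum_eq,
    sub_smul, one_smul]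
  abel

theorem Finset.sum_filter_nonneg_eq_half_sum_abs {ι : Type*} (s : Finset ι) (f : ι → ℝ)
    (hf : ∑ i ∈ s, f i = 0) : ∑ i ∈ s with 0 ≤ f i, f i = 2⁻¹ * ∑ i ∈ s, |f i| := by
  have hsplit := s.sum_filter_add_sum_filter_not (0 ≤ f ·) f
  have habs := s.sum_filter_add_sum_filter_not (0 ≤ f ·) (|f ·|)
  have hpos : ∑ i ∈ s with 0 ≤ f i, |f i| = ∑ i ∈ s with 0 ≤ f i, f i :=
    Finset.sum_congr rfl fun i hi => abs_of_nonneg (Finset.mem_filter.mp hi).2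
  have hneg : ∑ i ∈ s with ¬0 ≤ f i, |f i| = -∑ i ∈ s with ¬0 ≤ f i, f i := by
    rw [← Finset.sum_neg_distrib]
    exact Finset.sum_congr rfl fun i hi => abs_of_neg (not_le.mp (Finset.mem_filter.mp hi).2)
  linarith

theorem IsSelfAdjoint.isStarProjection_two_inv_smul_add_one {𝕜 R : Type*} [RCLike 𝕜] [Ring R]
    [StarRing R] [Algebra 𝕜 R] [StarModule 𝕜 R] {s : R} (hs : IsSelfAdjoint s) (hss : s * s = 1) :
    IsStarProjection ((2⁻¹ : 𝕜) • (s + 1)) where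
  isIdempotentElem := by
    have hsq : (s + 1) * (s + 1) = (2 : 𝕜) • (s + 1) := by
      simp only [add_mul, mul_add, hss, mul_one, one_mul, two_smul]
      abel
    rw [IsIdempotentElem, smul_mul_smul_comm, hsq, smul_smul]
    norm_num
  isSelfAdjoint := .smul (by simp [IsSelfAdjoint] : IsSelfAdjoint (2⁻¹ : 𝕜)) (hs.add (.one R))

theorem IsStarProjection.posSemidef {n 𝕜 : Type*} [Fintype n] [RCLike 𝕜] {Q : Matrix n n 𝕜}
    (hQ : IsStarProjection Q) : Q.PosSemidef := by
  open scoped MatrixOrder in exact hQ.nonneg.posSemidef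

namespace Complex

theorem normSq_exp_neg_mul_I (φ : ℝ) : normSq (exp (-(φ * I))) = 1 := by
  rw [← neg_mul, ← ofReal_neg, normSq_eq_norm_sq, norm_exp_ofReal_mul_I, one_pow]

theorem normSq_exp_neg_mul_I_sub_one_div_two (φ : ℝ) :
    normSq ((exp (-(φ * I)) - 1) / 2) = (1 - Real.cos φ) / 2 := by
  rw [← neg_mul, ← ofReal_neg, normSq_div, normSq_apply, sub_re, sub_im, exp_ofReal_mul_I_re,
    exp_ofReal_mul_I_im]
  simp only [Real.cos_neg, Real.sin_neg, one_re, one_im, normSq_ofNat]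
  linear_combination (1 / 4 : ℝ) * Real.sin_sq_add_cos_sq φ

theorem normSq_one_add_exp_neg_mul_I_div_two (φ : ℝ) :
    normSq ((1 + exp (-(φ * I))) / 2) = (1 + Real.cos φ) / 2 := by
  rw [← neg_mul, ← ofReal_neg, normSq_div, normSq_apply, add_re, add_im, exp_ofReal_mul_I_re,
    exp_ofReal_mul_I_im]
  simp only [Real.cos_neg, Real.sin_neg, one_re, one_im, normSq_ofNat]
  linear_combination (1 / 4 : ℝ) * Real.sin_sq_add_cos_sq φ

end Complex

namespace Matrix

section SpanProjection

variable {ι n 𝕜 : Type*} [Fintype n] [CommRing 𝕜] [StarRing 𝕜] {u : ι → n → 𝕜}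

def spanProjection (u : ι → n → 𝕜) (s : Finset ι) : Matrix n n 𝕜 :=
  ∑ j ∈ s, vecMulVec (u j) (star (u j))

variable [DecidableEq ι] (hu : ∀ i j, star (u i) ⬝ᵥ u j = if i = j then 1 else 0)
include hu

theorem trace_vecMulVec_self (j : ι) : trace (vecMulVec (u j) (star (u j))) = 1 := by
  rw [trace_vecMulVec, dotProduct_comm, hu, if_pos rfl]

theorem spanProjection_mul_vecMulVec_self (s : Finset ι) (j : ι) :
    spanProjection u s * vecMulVec (u j) (star (u j)) =
      if j ∈ s then vecMulVec (u j) (star (u j)) else 0 := by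
  simp only [spanProjection, Finset.sum_mul, vecMulVec_mul_vecMulVec, vecMulVec_smul]
  simp only [hu, ite_smul, one_smul, zero_smul]
  exact Finset.sum_ite_eq' s j _

theorem isStarProjection_spanProjection (s : Finset ι) : IsStarProjection (spanProjection u s) where
  isIdempotentElem := by
    rw [IsIdempotentElem]
    conv_lhs => rw [spanProjection, Finset.mul_sum]
    exact Finset.sum_congr rfl fun j hj => by
      rw [← spanProjection, spanProjection_mul_vecMulVec_self hu, if_pos hj]
  isSelfAdjoint := by
    simp only [IsSelfAdjoint, spanProjection, star_sum, star_eq_conjTranspose,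
      conjTranspose_vecMulVec, star_star]

theorem trace_spanProjection_mul_sum [Fintype ι] (s : Finset ι) (c : ι → 𝕜) :
    trace (spanProjection u s * ∑ j, c j • vecMulVec (u j) (star (u j))) = ∑ j ∈ s, c j := by
  simp only [Finset.mul_sum, mul_smul_comm, trace_sum, trace_smul,
    spanProjection_mul_vecMulVec_self hu, apply_ite trace, trace_vecMulVec_self hu, trace_zero,
    smul_eq_mul, mul_ite, mul_one, mul_zero]
  rw [Finset.sum_ite_mem, Finset.univ_inter]

theorem trace_sum_smul_vecMulVec_self [Fintype ι] (c : ι → 𝕜) :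
    trace (∑ j, c j • vecMulVec (u j) (star (u j))) = ∑ j, c j := by
  simp only [trace_sum, trace_smul, trace_vecMulVec_self hu, smul_eq_mul, mul_one]

end SpanProjection

theorem trace_spanProjection_nonneg_mul_eq_half_sum_abs {ι n : Type*} [Fintype ι] [DecidableEq ι]
    [Fintype n] {u : ι → n → ℂ} (hu : ∀ i j, star (u i) ⬝ᵥ u j = if i = j then 1 else 0)
    (lam : ι → ℝ) {A : Matrix n n ℂ} (hA : A = ∑ j, (lam j : ℂ) • vecMulVec (u j) (star (u j)))
    (htr : trace A = 0) :
    trace (spanProjection u {j | 0 ≤ lam j} * A) = ((2⁻¹ * ∑ j, |lam j| : ℝ) : ℂ) := by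
  have hsum : ∑ j, lam j = 0 := by
    rw [hA, trace_sum_smul_vecMulVec_self hu] at htr
    exact_mod_cast htr
  rw [hA, trace_spanProjection_mul_sum hu, ← Finset.sum_filter_nonneg_eq_half_sum_abs _ _ hsum]
  push_cast
  rfl

section Controlled

variable {m n α : Type*} [CommRing α] [DecidableEq m]

def controlled (P : Matrix m m α) (A B : Matrix n n α) : Matrix (m × n) (m × n) α :=
  (1 - P) ⊗ₖ A + P ⊗ₖ B

variable {P : Matrix m m α}

theorem controlled_one_one [DecidableEq n] : controlled P (1 : Matrix n n α) 1 = 1 := by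
  rw [controlled, ← add_kronecker, sub_add_cancel, one_kronecker_one]

theorem controlled_add (A B A' B' : Matrix n n α) :
    controlled P A B + controlled P A' B' = controlled P (A + A') (B + B') := by
  simp only [controlled, kronecker_add]
  abel

theorem smul_controlled (c : α) (A B : Matrix n n α) :
    c • controlled P A B = controlled P (c • A) (c • B) := by
  simp only [controlled, smul_add, kronecker_smul]

theorem controlled_mul_controlled [Fintype m] [Fintype n] (hP : IsIdempotentElem P)
    (A B A' B' : Matrix n n α) :
    controlled P A B * controlled P A' B' = controlled P (A * A') (B * B') := by
  simp only [controlled, add_mul, mul_add, ← mul_kronecker_mul, hP.eq, hP.one_sub.eq,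
    hP.mul_one_sub_self, hP.one_sub_mul_self, zero_kronecker, add_zero, zero_add]

theorem conjTranspose_controlled [StarRing α] (hP : P.IsHermitian) (A B : Matrix n n α) :
    (controlled P A B)ᴴ = controlled P Aᴴ Bᴴ := by
  simp only [controlled, conjTranspose_add, conjTranspose_kronecker, conjTranspose_sub,
    conjTranspose_one, hP.eq]

theorem trace_one_kronecker_mul_controlled [Fintype m] [Fintype n] (hP : IsIdempotentElem P)
    (ρ : Matrix m m α) (K R A B A' B' : Matrix n n α) :
    trace ((1 ⊗ₖ K) * (controlled P A B * (ρ ⊗ₖ R) * controlled P A' B')) =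
      trace ((1 - P) * ρ) * trace (K * A * R * A') + trace (P * ρ) * trace (K * B * R * B') := by
  have hblock : ∀ (X Y : Matrix m m α) (C D : Matrix n n α),
      trace ((1 ⊗ₖ K) * ((X ⊗ₖ C) * (ρ ⊗ₖ R) * (Y ⊗ₖ D))) =
        trace (Y * X * ρ) * trace (K * C * R * D) := by
    intro X Y C D
    rw [← mul_kronecker_mul, ← mul_kronecker_mul, ← mul_kronecker_mul, trace_kronecker,
      one_mul, trace_mul_cycle, ← Matrix.mul_assoc, ← Matrix.mul_assoc]
  simp only [controlled, add_mul, mul_add, trace_add, hblock, hP.eq, hP.one_sub.eq,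
    hP.mul_one_sub_self, hP.one_sub_mul_self, trace_zero, zero_mul, add_zero, zero_add]

theorem trace_single_mul_mul_single_mul_conjTranspose [Fintype n] [DecidableEq n] [StarRing α]
    (i j : n) (M : Matrix n n α) :
    trace (single i i 1 * M * single j j 1 * Mᴴ) = M i j * star (M i j) := by
  simp [trace_single_mul, conjTranspose_apply]

theorem trace_one_kronecker_single_mul_controlled_conj [Fintype m] [Fintype n] [DecidableEq n]
    [StarRing α] (hP : IsStarProjection P) (ρ : Matrix m m α) (A B : Matrix n n α) (i j : n) :
    trace ((1 ⊗ₖ single i i 1) *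
        (controlled P A B * (ρ ⊗ₖ single j j 1) * (controlled P A B)ᴴ)) =
      trace ((1 - P) * ρ) * (A i j * star (A i j)) + trace (P * ρ) * (B i j * star (B i j)) := by
  rw [conjTranspose_controlled hP.isSelfAdjoint, trace_one_kronecker_mul_controlled
    hP.isIdempotentElem, trace_single_mul_mul_single_mul_conjTranspose,
    trace_single_mul_mul_single_mul_conjTranspose]

end Controlled

def pauliX {α : Type*} [AddZeroClass α] [One α] : Matrix (Fin 2) (Fin 2) α :=
  single 0 1 1 + single 1 0 1

theorem pauliX_mul_self {α : Type*} [Semiring α] :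
    (pauliX : Matrix (Fin 2) (Fin 2) α) * pauliX = 1 := by
  ext i j
  fin_cases i <;> fin_cases j <;> simp [pauliX, mul_apply, Fin.sum_univ_two]

theorem isHermitian_pauliX {α : Type*} [Semiring α] [StarRing α] :
    (pauliX : Matrix (Fin 2) (Fin 2) α).IsHermitian := by
  ext i j
  fin_cases i <;> fin_cases j <;> simp [pauliX, conjTranspose_apply]

section TwoLevel

variable {m : Type*} [Fintype m] [DecidableEq m] {P : Matrix m m ℂ}

theorem isStarProjection_two_inv_smul_controlled_pauliX_add_one (hP : IsStarProjection P) :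
    IsStarProjection ((2⁻¹ : ℂ) • (controlled P 1 pauliX + 1)) := by
  refine IsSelfAdjoint.isStarProjection_two_inv_smul_add_one ?_ ?_
  · rw [IsSelfAdjoint, star_eq_conjTranspose, conjTranspose_controlled hP.isSelfAdjoint,
      conjTranspose_one, isHermitian_pauliX.eq]
  · rw [controlled_mul_controlled hP.isIdempotentElem, one_mul, pauliX_mul_self,
      controlled_one_one]

theorem exp_smul_two_inv_smul_controlled_pauliX_add_one (hP : IsStarProjection P) (z : ℂ) :
    NormedSpace.exp (z • (2⁻¹ : ℂ) • (controlled P 1 pauliX + 1)) =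
      controlled P (Complex.exp z • 1) (1 + ((Complex.exp z - 1) / 2) • (pauliX + 1)) := by
  rw [(isStarProjection_two_inv_smul_controlled_pauliX_add_one hP).isIdempotentElem.exp_smul,
    ← Complex.exp_eq_exp_ℂ, ← controlled_one_one (P := P) (n := Fin 2), controlled_add,
    smul_controlled, smul_controlled, controlled_add]
  congr 1 <;> module

/-- `exp (-i t H)` for `H = E_max • (Ĥ + 1) / 2`, with `φ = t E_max`. -/
noncomputable def controlledFlipEvolution (P : Matrix m m ℂ) (φ : ℝ) :
    Matrix (m × Fin 2) (m × Fin 2) ℂ :=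
  NormedSpace.exp ((-(φ * Complex.I)) • (2⁻¹ : ℂ) • (controlled P 1 pauliX + 1))

theorem trace_one_kronecker_single_zero_mul_controlledFlipEvolution_conj
    (hP : IsStarProjection P) (ρ : Matrix m m ℂ) (φ : ℝ) :
    trace ((1 ⊗ₖ single 0 0 1) * (controlledFlipEvolution P φ * (ρ ⊗ₖ single 0 0 1) *
        (controlledFlipEvolution P φ)ᴴ)) =
      trace ((1 - P) * ρ) + trace (P * ρ) * ((1 + Real.cos φ) / 2 : ℝ) := by
  rw [controlledFlipEvolution, exp_smul_two_inv_smul_controlled_pauliX_add_one hP,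
    trace_one_kronecker_single_mul_controlled_conj hP]
  have hstay : (1 + ((Complex.exp (-(φ * Complex.I)) - 1) / 2) • (pauliX + 1) :
      Matrix (Fin 2) (Fin 2) ℂ) 0 0 = (1 + Complex.exp (-(φ * Complex.I))) / 2 := by
    simp [pauliX]
    ring
  simp only [hstay, smul_apply, one_apply_eq, smul_eq_mul, mul_one, Complex.star_def,
    Complex.mul_conj, Complex.normSq_one_add_exp_neg_mul_I_div_two, Complex.normSq_exp_neg_mul_I,
    Complex.ofReal_one]

theorem trace_one_kronecker_single_one_mul_controlledFlipEvolution_conj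
    (hP : IsStarProjection P) (ρ : Matrix m m ℂ) (φ : ℝ) :
    trace ((1 ⊗ₖ single 1 1 1) * (controlledFlipEvolution P φ * (ρ ⊗ₖ single 0 0 1) *
        (controlledFlipEvolution P φ)ᴴ)) = trace (P * ρ) * ((1 - Real.cos φ) / 2 : ℝ) := by
  rw [controlledFlipEvolution, exp_smul_two_inv_smul_controlled_pauliX_add_one hP,
    trace_one_kronecker_single_mul_controlled_conj hP]
  have hflip : (1 + ((Complex.exp (-(φ * Complex.I)) - 1) / 2) • (pauliX + 1) :
      Matrix (Fin 2) (Fin 2) ℂ) 1 0 = (Complex.exp (-(φ * Complex.I)) - 1) / 2 := by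
    simp [pauliX]
  simp only [hflip, smul_apply, one_apply_ne one_ne_zero, smul_zero, star_zero, mul_zero,
    zero_add, Complex.star_def, Complex.mul_conj, Complex.normSq_exp_neg_mul_I_sub_one_div_two]

end TwoLevel

end Matrix

open scoped Classical in
theorem attainability_general {d : ℕ} (ρ₀ ρ₁ : Matrix (Fin d) (Fin d) ℂ)
    (htr₀ : ρ₀.trace = 1) (htr₁ : ρ₁.trace = 1)
    (lam : Fin d → ℝ) (u : Fin d → Fin d → ℂ)
    (hu : ∀ i j, star (u i) ⬝ᵥ u j = if i = j then 1 else 0)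
    (hA : ρ₁ - ρ₀ = ∑ j, (lam j : ℂ) • vecMulVec (u j) (star (u j)))
    (Emax : ℝ) (hEmax : 0 ≤ Emax) (t : ℝ) :
    let Pplus : Matrix (Fin d) (Fin d) ℂ :=
      ∑ j, if 0 ≤ lam j then vecMulVec (u j) (star (u j)) else 0
    let Pminus : Matrix (Fin d) (Fin d) ℂ := 1 - Pplus
    let Hhat : Matrix (Fin d × Fin 2) (Fin d × Fin 2) ℂ :=
      Pminus ⊗ₖ (1 : Matrix (Fin 2) (Fin 2) ℂ) +
        Pplus ⊗ₖ (Matrix.single (0 : Fin 2) 1 (1 : ℂ) +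
          Matrix.single (1 : Fin 2) 0 (1 : ℂ))
    let H : Matrix (Fin d × Fin 2) (Fin d × Fin 2) ℂ :=
      ((Emax / 2 : ℝ) : ℂ) • (Hhat + 1)
    let U : Matrix (Fin d × Fin 2) (Fin d × Fin 2) ℂ :=
      NormedSpace.exp ((-(Complex.I * (t : ℂ))) • H)
    H.PosSemidef ∧
      (((Emax : ℝ) : ℂ) • (1 : Matrix (Fin d × Fin 2) (Fin d × Fin 2) ℂ) - H).PosSemidef ∧
      (1 / 2 : ℂ) *
          ((((1 : Matrix (Fin d) (Fin d) ℂ) ⊗ₖ Matrix.single (0 : Fin 2) 0 (1 : ℂ)) *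
              (U * (ρ₀ ⊗ₖ Matrix.single (0 : Fin 2) 0 (1 : ℂ)) * Uᴴ)).trace +
            (((1 : Matrix (Fin d) (Fin d) ℂ) ⊗ₖ Matrix.single (1 : Fin 2) 1 (1 : ℂ)) *
              (U * (ρ₁ ⊗ₖ Matrix.single (0 : Fin 2) 0 (1 : ℂ)) * Uᴴ)).trace) =
        ((1 / 2 + 1 / 4 * (1 - Real.cos (t * Emax)) * (1 / 2 * ∑ j, |lam j|) : ℝ) : ℂ) := by
  intro Pplus Pminus Hhat H U
  have hPplus : Pplus = spanProjection u {j | 0 ≤ lam j} := (Finset.sum_filter _ _).symm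
  have hP : IsStarProjection Pplus := hPplus ▸ isStarProjection_spanProjection hu _
  have hHhat : Hhat = controlled Pplus 1 pauliX := rfl
  have hQ : IsStarProjection ((2⁻¹ : ℂ) • (Hhat + 1)) :=
    hHhat ▸ isStarProjection_two_inv_smul_controlled_pauliX_add_one hP
  have hH : H = (Emax : ℂ) • (2⁻¹ : ℂ) • (Hhat + 1) := by
    change ((Emax / 2 : ℝ) : ℂ) • (Hhat + 1) = _
    rw [smul_smul]
    congr 1
    push_cast
    ring
  have hEmax' : (0 : ℂ) ≤ Emax := mod_cast hEmax
  refine ⟨hH ▸ hQ.posSemidef.smul hEmax', ?_, ?_⟩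
  · rw [hH, ← smul_sub]
    exact hQ.one_sub.posSemidef.smul hEmax'
  have hU : U = controlledFlipEvolution Pplus (t * Emax) := by
    change NormedSpace.exp ((-(Complex.I * t)) • H) = _
    rw [hH, smul_smul, hHhat, controlledFlipEvolution]
    congr 2
    push_cast
    ring
  have hgap : trace (Pplus * ρ₁) - trace (Pplus * ρ₀) = ((2⁻¹ * ∑ j, |lam j| : ℝ) : ℂ) := by
    rw [← trace_sub, ← Matrix.mul_sub, hPplus]
    exact trace_spanProjection_nonneg_mul_eq_half_sum_abs hu lam hA
      (by rw [trace_sub, htr₀, htr₁, sub_self])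
  have hstay : trace ((1 - Pplus) * ρ₀) = 1 - trace (Pplus * ρ₀) := by
    rw [Matrix.sub_mul, Matrix.one_mul, trace_sub, htr₀]
  rw [hU, trace_one_kronecker_single_zero_mul_controlledFlipEvolution_conj hP,
    trace_one_kronecker_single_one_mul_controlledFlipEvolution_conj hP, hstay]
  push_cast at hgap ⊢
  linear_combination (1 - Complex.cos (t * Emax)) / 4 * hgap

open scoped Classical in
/-- Attainability (Theorem 4 of the paper): for two equiprobable states `ρ₀, ρ₁`,
writing `A = ρ₁ - ρ₀ = ∑ⱼ λⱼ|uⱼ⟩⟨uⱼ|` with projectors `Π₊` (nonnegative eigenvalues)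
and `Π₋ = I - Π₊`, the Hamiltonian `H = E_max(Ĥ + I)/2` with
`Ĥ = Π₋⊗I + Π₊⊗(|0⟩⟨1| + |1⟩⟨0|)` satisfies `0 ≤ H ≤ E_max·I`, and evolving
`ρ̃ₓ = ρₓ⊗|0⟩⟨0|` by `U = exp(-iHt)` followed by a computational-basis measurement of
the ancilla yields success probability exactly
`1/2 + (1/4)(1 - cos(t E_max)) D(ρ₀,ρ₁)`, where `D(ρ₀,ρ₁) = (1/2)∑ⱼ|λⱼ|`. -/
theorem attainability {d : ℕ} (ρ₀ ρ₁ : Matrix (Fin d) (Fin d) ℂ)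
    (hρ₀ : ρ₀.PosSemidef) (hρ₁ : ρ₁.PosSemidef)
    (htr₀ : ρ₀.trace = 1) (htr₁ : ρ₁.trace = 1)
    (lam : Fin d → ℝ) (u : Fin d → Fin d → ℂ)
    (hu : ∀ i j, star (u i) ⬝ᵥ u j = if i = j then 1 else 0)
    (hA : ρ₁ - ρ₀ = ∑ j, (lam j : ℂ) • vecMulVec (u j) (star (u j)))
    (Emax : ℝ) (hEmax : 0 ≤ Emax) (t : ℝ) (ht : 0 ≤ t) :
    let Pplus : Matrix (Fin d) (Fin d) ℂ :=
      ∑ j, if 0 ≤ lam j then vecMulVec (u j) (star (u j)) else 0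
    let Pminus : Matrix (Fin d) (Fin d) ℂ := 1 - Pplus
    let Hhat : Matrix (Fin d × Fin 2) (Fin d × Fin 2) ℂ :=
      Pminus ⊗ₖ (1 : Matrix (Fin 2) (Fin 2) ℂ) +
        Pplus ⊗ₖ (Matrix.single (0 : Fin 2) 1 (1 : ℂ) +
          Matrix.single (1 : Fin 2) 0 (1 : ℂ))
    let H : Matrix (Fin d × Fin 2) (Fin d × Fin 2) ℂ :=
      ((Emax / 2 : ℝ) : ℂ) • (Hhat + 1)
    let U : Matrix (Fin d × Fin 2) (Fin d × Fin 2) ℂ :=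
      NormedSpace.exp ((-(Complex.I * (t : ℂ))) • H)
    H.PosSemidef ∧
      (((Emax : ℝ) : ℂ) • (1 : Matrix (Fin d × Fin 2) (Fin d × Fin 2) ℂ) - H).PosSemidef ∧
      (1 / 2 : ℂ) *
          ((((1 : Matrix (Fin d) (Fin d) ℂ) ⊗ₖ Matrix.single (0 : Fin 2) 0 (1 : ℂ)) *
              (U * (ρ₀ ⊗ₖ Matrix.single (0 : Fin 2) 0 (1 : ℂ)) * Uᴴ)).trace +
            (((1 : Matrix (Fin d) (Fin d) ℂ) ⊗ₖ Matrix.single (1 : Fin 2) 1 (1 : ℂ)) *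
              (U * (ρ₁ ⊗ₖ Matrix.single (0 : Fin 2) 0 (1 : ℂ)) * Uᴴ)).trace) =
        ((1 / 2 + 1 / 4 * (1 - Real.cos (t * Emax)) * (1 / 2 * ∑ j, |lam j|) : ℝ) : ℂ) :=
  attainability_general ρ₀ ρ₁ htr₀ htr₁ lam u hu hA Emax hEmax t
end

section
/- (Time-dependent Tsirelson bound from the two-state bounds.) Suppose for z ∈ {0,1} Bob must discriminate states σ₀ᶻ, σ₁ᶻ with priors p₀ᶻ, p₁ᶻ (p₀ᶻ + p₁ᶻ = 1), and suppose Tsirelson's bound holds in the time-unlimited case: (1/4)∑_{z,x} tr((p_{x̄}ᶻσ_{x̄}ᶻ - pₓᶻσₓᶻ)⁺) ≤ 1/(2√2), where x̄ = 1-x. If each time-limited guessing probability satisfies P_guess(Xᶻ|Eᶻ)_{H,t} ≤ p_maxᶻ + C·tr((p_minᶻσ_minᶻ - p_maxᶻσ_maxᶻ)⁺) with C := γt‖H‖_∞ ≥ 0, then the winning probability p_win = (1/2)∑_z P_guess(Xᶻ|Eᶻ)_{H,t} satisfies p_win ≤ (1/2)(p_max⁰ + p_max¹) + C/√2. In particular,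 since (1/2)(p_max⁰ + p_max¹) ≤ 3/4, p_win ≤ 3/4 + γt‖H‖_∞/√2. -/
open Matrix ComplexOrder

lemma posPart'_trace {ι : Type*} [Fintype ι] [DecidableEq ι]
    (A : Matrix ι ι ℂ) (hA : A.IsHermitian) :
    (posPart' A hA).trace = ((∑ i, max (hA.eigenvalues i) 0 : ℝ) : ℂ) := by
  unfold posPart'
  rw [Matrix.trace_mul_cycle]
  have h1 : star (hA.eigenvectorUnitary : Matrix ι ι ℂ) * (hA.eigenvectorUnitary : Matrix ι ι ℂ) = 1 :=
    (Unitary.mem_iff.mp hA.eigenvectorUnitary.prop).1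
  rw [h1, Matrix.one_mul, Matrix.trace_diagonal]
  push_cast
  rfl

open scoped Classical in
/-- Time-dependent Tsirelson bound (Corollary 2 of the paper): if Tsirelson's bound
holds for the time-unlimited discrimination problems and each time-limited guessing
probability obeys the two-state bound with constant `C = γ t ‖H‖_∞ ≥ 0`, then
`p_win = (1/2)∑_z P_guess(Xᶻ|Eᶻ) ≤ (1/2)(p_max⁰ + p_max¹) + C/√2`; in particular,
if the classical bound `(1/2)(p_max⁰ + p_max¹) ≤ 3/4` holds, then
`p_win ≤ 3/4 + C/√2`. -/
theorem time_dependent_tsirelson {d : ℕ}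
    (σ : Fin 2 → Fin 2 → Matrix (Fin d) (Fin d) ℂ)
    (hσ : ∀ z x, (σ z x).PosSemidef) (htr : ∀ z x, (σ z x).trace = 1)
    (p : Fin 2 → Fin 2 → ℝ) (hp : ∀ z x, 0 ≤ p z x)
    (hpsum : ∀ z, p z 0 + p z 1 = 1)
    (hD : ∀ z x : Fin 2,
      ((p z (1 - x) : ℂ) • σ z (1 - x) - (p z x : ℂ) • σ z x).IsHermitian)
    (htsirelson : (1 / 4 : ℂ) * ∑ z, ∑ x,
        (posPart' ((p z (1 - x) : ℂ) • σ z (1 - x) - (p z x : ℂ) • σ z x)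
          (hD z x)).trace ≤
      ((1 / (2 * Real.sqrt 2) : ℝ) : ℂ))
    (xmax : Fin 2 → Fin 2) (hxmax : ∀ z x, p z x ≤ p z (xmax z))
    (C : ℝ) (hC : 0 ≤ C)
    (Pg : Fin 2 → ℂ)
    (hPg : ∀ z, Pg z ≤ (p z (xmax z) : ℂ) + (C : ℂ) *
      (posPart' ((p z (1 - xmax z) : ℂ) • σ z (1 - xmax z) -
          (p z (xmax z) : ℂ) • σ z (xmax z)) (hD z (xmax z))).trace) :
    (1 / 2 : ℂ) * ∑ z, Pg z ≤
        ((1 / 2 * (p 0 (xmax 0) + p 1 (xmax 1)) + C / Real.sqrt 2 : ℝ) : ℂ) ∧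
      (1 / 2 * (p 0 (xmax 0) + p 1 (xmax 1)) ≤ 3 / 4 →
        (1 / 2 : ℂ) * ∑ z, Pg z ≤ ((3 / 4 + C / Real.sqrt 2 : ℝ) : ℂ)) := by
  -- real-valued traces
  set r : Fin 2 → Fin 2 → ℝ := fun z x =>
    ∑ i, max ((hD z x).eigenvalues i) 0 with hr
  have htrace : ∀ z x,
      (posPart' ((p z (1 - x) : ℂ) • σ z (1 - x) - (p z x : ℂ) • σ z x)
        (hD z x)).trace = ((r z x : ℝ) : ℂ) := fun z x => posPart'_trace _ _
  have hrnn : ∀ z x, 0 ≤ r z x := fun z x =>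
    Finset.sum_nonneg fun i _ => le_max_right _ _
  -- from Tsirelson: r 0 (xmax 0) + r 1 (xmax 1) ≤ √2
  have hts : (1 / 4 : ℝ) * ∑ z, ∑ x, r z x ≤ 1 / (2 * Real.sqrt 2) := by
    have := htsirelson
    simp only [htrace] at this
    rw [show (∑ z, ∑ x, (((r z x : ℝ)) : ℂ)) = ((∑ z, ∑ x, r z x : ℝ) : ℂ) by push_cast; ring] at this
    rw [show (1 / 4 : ℂ) * ((∑ z, ∑ x, r z x : ℝ) : ℂ)
        = (((1 / 4 : ℝ) * ∑ z, ∑ x, r z x : ℝ) : ℂ) by push_cast; ring] at this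
    exact_mod_cast this
  have hsum_le : r 0 (xmax 0) + r 1 (xmax 1) ≤ Real.sqrt 2 := by
    have hzx : ∀ z, r z (xmax z) ≤ ∑ x, r z x := by
      intro z
      rw [Fin.sum_univ_two]
      rcases (by omega : xmax z = 0 ∨ xmax z = 1) with h | h <;> rw [h] <;>
        nlinarith [hrnn z 0, hrnn z 1]
    have h1 : r 0 (xmax 0) + r 1 (xmax 1) ≤ ∑ z, ∑ x, r z x := by
      rw [Fin.sum_univ_two]
      exact add_le_add (hzx 0) (hzx 1)
    have hs2 : Real.sqrt 2 > 0 := Real.sqrt_pos.mpr (by norm_num)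
    have hsq : Real.sqrt 2 * Real.sqrt 2 = 2 := Real.mul_self_sqrt (by norm_num)
    calc r 0 (xmax 0) + r 1 (xmax 1) ≤ ∑ z, ∑ x, r z x := h1
      _ ≤ 4 * (1 / (2 * Real.sqrt 2)) := by linarith
      _ = Real.sqrt 2 := by field_simp; nlinarith
  -- bound the winning probability
  have key : (1 / 2 : ℂ) * ∑ z, Pg z ≤
      ((1 / 2 * (p 0 (xmax 0) + p 1 (xmax 1)) + C / Real.sqrt 2 : ℝ) : ℂ) := by
    have hPg0 := hPg 0
    have hPg1 := hPg 1
    rw [htrace 0 (xmax 0)] at hPg0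
    rw [htrace 1 (xmax 1)] at hPg1
    have hsumPg : ∑ z, Pg z ≤
        ((p 0 (xmax 0) + C * r 0 (xmax 0) + (p 1 (xmax 1) + C * r 1 (xmax 1)) : ℝ) : ℂ) := by
      rw [Fin.sum_univ_two]
      push_cast
      exact add_le_add hPg0 hPg1
    have hhalf : (0 : ℂ) ≤ 1 / 2 := by
      rw [show ((1:ℂ)/2) = ((1/2 : ℝ) : ℂ) by push_cast; ring, show (0:ℂ) = ((0:ℝ):ℂ) by simp,
        Complex.real_le_real]
      norm_num
    have h2 : (1 / 2 : ℂ) * ∑ z, Pg z ≤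
        (((1 / 2) * (p 0 (xmax 0) + C * r 0 (xmax 0) + (p 1 (xmax 1) + C * r 1 (xmax 1))) : ℝ) : ℂ) := by
      rw [show ((((1 / 2) * (p 0 (xmax 0) + C * r 0 (xmax 0) + (p 1 (xmax 1) + C * r 1 (xmax 1))) : ℝ)) : ℂ)
          = (1 / 2 : ℂ) * ((p 0 (xmax 0) + C * r 0 (xmax 0) + (p 1 (xmax 1) + C * r 1 (xmax 1)) : ℝ) : ℂ) by
        push_cast; ring]
      exact mul_le_mul_of_nonneg_left hsumPg hhalf
    refine h2.trans ?_
    rw [Complex.real_le_real]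
    have hs2 : (0:ℝ) < Real.sqrt 2 := Real.sqrt_pos.mpr (by norm_num)
    have hsq : Real.sqrt 2 * Real.sqrt 2 = 2 := Real.mul_self_sqrt (by norm_num)
    have : C * (r 0 (xmax 0) + r 1 (xmax 1)) ≤ C * Real.sqrt 2 :=
      mul_le_mul_of_nonneg_left hsum_le hC
    have hCdiv : C / 2 * Real.sqrt 2 = C / Real.sqrt 2 := by
      field_simp; nlinarith
    nlinarith [this]
  refine ⟨key, fun hcl => key.trans ?_⟩
  rw [Complex.real_le_real]
  linarith
end
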